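/- arXiv:1707.08138 — 4 statements merged into one kernel-verified Lean document; each statement's English description precedes it below -/
import Mathlib

section
/- For every natural number n, the alternating binomial transform of the restricted Bell numbers satisfies ∑_{i=0}^{n} (-1)^i C(n,i) B_{i,≤2} = (n-1)!! = n!/(2^{n/2} (n/2)!) if n is even, and ∑_{i=0}^{n} (-1)^i C(n,i) B_{i,≤2} = 0 if n is odd. -/
/-- The restricted Bell number `B_{n,≤m}`: the number of partitions of an `n`-element set
into nonempty blocks each of size at most `m`. -/
noncomputable def restrictedBell (n m : ℕ) : ℕ :=
  Nat.card {P : Finpartition (Finset.univ : Finset (Fin n)) // ∀ b ∈ P.parts, b.card ≤ m}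

/-- The associated Bell number `B_{n,≥m}`: the number of partitions of an `n`-element set
into nonempty blocks each of size at least `m`. -/
noncomputable def associatedBell (n m : ℕ) : ℕ :=
  Nat.card {P : Finpartition (Finset.univ : Finset (Fin n)) // ∀ b ∈ P.parts, m ≤ b.card}

/-- The Bell number `B_n`: the number of partitions of an `n`-element set. -/
noncomputable def bell (n : ℕ) : ℕ :=
  Nat.card (Finpartition (Finset.univ : Finset (Fin n)))

/-- The restricted factorial number `A_{n,≤m}`: the number of permutations of `n` elements
all of whose cycles have length at most `m`. -/
noncomputable def restrictedFactorial (n m : ℕ) : ℕ :=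
  Nat.card {σ : Equiv.Perm (Fin n) // ∀ x, Function.minimalPeriod σ x ≤ m}

/-- The associated factorial number `A_{n,≥m}`: the number of permutations of `n` elements
all of whose cycles have length at least `m`. -/
noncomputable def associatedFactorial (n m : ℕ) : ℕ :=
  Nat.card {σ : Equiv.Perm (Fin n) // ∀ x, m ≤ Function.minimalPeriod σ x}


section Aux

open Finset

variable {α β : Type*} [DecidableEq α] [DecidableEq β]

lemma image_image_of_leftInv (f : α → β) (g : β → α) (u : Finset α)
    (h : ∀ x ∈ u, g (f x) = x) : (u.image f).image g = u := by
  ext a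
  simp only [Finset.mem_image]
  constructor
  · rintro ⟨y, ⟨x, hx, rfl⟩, rfl⟩
    rwa [h x hx]
  · intro ha
    exact ⟨f a, ⟨a, ha, rfl⟩, h a ha⟩

/-- Transfer a finpartition along a relabeling of the ground set. -/
def Finpartition.mapImage {s : Finset α} (P : Finpartition s) (f : α → β)
    (hf : Set.InjOn f s) : Finpartition (s.image f) where
  parts := P.parts.image (Finset.image f)
  supIndep := by
    rw [Finset.supIndep_iff_pairwiseDisjoint]
    rintro b hb c hc hbc
    simp only [coe_image, Set.mem_image, mem_coe] at hb hc
    obtain ⟨b', hb', rfl⟩ := hb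
    obtain ⟨c', hc', rfl⟩ := hc
    have hbc' : b' ≠ c' := by rintro rfl; exact hbc rfl
    have hd : Disjoint b' c' := P.disjoint hb' hc' hbc'
    simp only [Function.onFun, id_eq]
    rw [Finset.disjoint_left]
    rintro x hx hx'
    simp only [Finset.mem_image] at hx hx'
    obtain ⟨y, hy, rfl⟩ := hx
    obtain ⟨z, hz, hzy⟩ := hx'
    have : z = y := hf (mem_coe.2 <| (P.le hc') hz) (mem_coe.2 <| (P.le hb') hy) hzy
    exact (Finset.disjoint_left.1 hd hy) (this ▸ hz)
  sup_parts := by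
    ext y
    simp only [Finset.mem_sup, id_eq]
    constructor
    · rintro ⟨b, hb, hy⟩
      simp only [Finset.mem_image] at hb
      obtain ⟨b', hb', rfl⟩ := hb
      simp only [Finset.mem_image] at hy ⊢
      obtain ⟨x, hx, rfl⟩ := hy
      exact ⟨x, (P.le hb') hx, rfl⟩
    · intro hy
      simp only [Finset.mem_image] at hy
      obtain ⟨x, hx, rfl⟩ := hy
      have hx' : x ∈ P.parts.sup id := by rw [P.sup_parts]; exact hx
      rw [Finset.mem_sup] at hx'
      obtain ⟨b, hb, hxb⟩ := hx'
      exact ⟨b.image f, Finset.mem_image.2 ⟨b, hb, rfl⟩, Finset.mem_image_of_mem _ hxb⟩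
  bot_notMem := by
    simp only [Finset.bot_eq_empty, Finset.mem_image]
    rintro ⟨b, hb, hb'⟩
    rw [Finset.image_eq_empty] at hb'
    exact P.bot_notMem (by rw [Finset.bot_eq_empty, ← hb']; exact hb)

@[simp] lemma Finpartition.mapImage_parts {s : Finset α} (P : Finpartition s) (f : α → β)
    (hf : Set.InjOn f s) : (P.mapImage f hf).parts = P.parts.image (Finset.image f) := rfl

/-- The number of restricted partitions is invariant under relabeling. -/
lemma card_part_le_two_congr {s : Finset α} {t : Finset β} (f : α → β) (g : β → α)
    (hst : s.image f = t) (hgf : ∀ x ∈ s, g (f x) = x) :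
    Nat.card {P : Finpartition s // ∀ b ∈ P.parts, b.card ≤ 2} =
      Nat.card {P : Finpartition t // ∀ b ∈ P.parts, b.card ≤ 2} := by
  have hf : Set.InjOn f s := fun x hx y hy h => by
    rw [← hgf x hx, ← hgf y hy, h]
  have htg : t.image g = s := by
    rw [← hst, image_image_of_leftInv f g s hgf]
  have hfg : ∀ y ∈ t, f (g y) = y := by
    intro y hy
    rw [← hst] at hy
    obtain ⟨x, hx, rfl⟩ := Finset.mem_image.1 hy
    rw [hgf x hx]
  have hg : Set.InjOn g t := fun x hx y hy h => by
    rw [← hfg x hx, ← hfg y hy, h]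
  refine Nat.card_congr ?_
  refine ⟨fun P => ⟨(P.1.mapImage f hf).copy hst, ?_⟩,
          fun Q => ⟨(Q.1.mapImage g hg).copy htg, ?_⟩, ?_, ?_⟩
  · rintro b hb
    simp only [Finpartition.copy_parts, Finpartition.mapImage_parts, Finset.mem_image] at hb
    obtain ⟨b', hb', rfl⟩ := hb
    exact (Finset.card_image_le).trans (P.2 b' hb')
  · rintro b hb
    simp only [Finpartition.copy_parts, Finpartition.mapImage_parts, Finset.mem_image] at hb
    obtain ⟨b', hb', rfl⟩ := hb
    exact (Finset.card_image_le).trans (Q.2 b' hb')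
  · rintro ⟨P, hP⟩
    apply Subtype.ext
    apply Finpartition.ext
    simp only [Finpartition.copy_parts, Finpartition.mapImage_parts, Finset.image_image]
    have : ∀ b ∈ P.parts, (Finset.image g ∘ Finset.image f) b = id b := by
      intro b hb
      simp only [Function.comp_apply, id_eq]
      exact image_image_of_leftInv f g b (fun x hx => hgf x ((P.le hb) hx))
    rw [Finset.image_congr this, Finset.image_id]
  · rintro ⟨Q, hQ⟩
    apply Subtype.ext
    apply Finpartition.ext
    simp only [Finpartition.copy_parts, Finpartition.mapImage_parts, Finset.image_image]
    have : ∀ b ∈ Q.parts, (Finset.image f ∘ Finset.image g) b = id b := by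
      intro b hb
      simp only [Function.comp_apply, id_eq]
      exact image_image_of_leftInv g f b (fun x hx => hfg x ((Q.le hb) hx))
    rw [Finset.image_congr this, Finset.image_id]


open Finset

noncomputable def pc (s : Finset ℕ) : ℕ :=
  Nat.card {P : Finpartition s // ∀ b ∈ P.parts, b.card ≤ 2}


lemma subtype_unique_card {γ : Type*} [Unique γ] (p : γ → Prop) (hp : p default) :
    Nat.card {x : γ // p x} = 1 := by
  have : Unique {x : γ // p x} :=
    ⟨⟨⟨default, hp⟩⟩, fun x => Subtype.ext (Unique.eq_default _)⟩
  exact Nat.card_unique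

lemma card_part_le_two_empty {α : Type*} [DecidableEq α] :
    Nat.card {P : Finpartition (∅ : Finset α) // ∀ b ∈ P.parts, b.card ≤ 2} = 1 := by
  have h0 : (∅ : Finset α) = (⊥ : Finset α) := rfl
  rw [h0]
  refine subtype_unique_card _ ?_
  intro b hb
  rw [Finpartition.parts_eq_empty_iff.2 rfl] at hb
  exact absurd hb (Finset.notMem_empty _)

lemma card_part_le_two_singleton {α : Type*} [DecidableEq α] (x : α) :
    Nat.card {P : Finpartition ({x} : Finset α) // ∀ b ∈ P.parts, b.card ≤ 2} = 1 := by
  haveI : Unique (Finpartition ({x} : Finset α)) :=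
    (Finset.isAtom_singleton x).uniqueFinpartition (P := Finpartition.indiscrete (Finset.singleton_ne_empty x))
  refine subtype_unique_card _ ?_
  intro b hb
  have hle : b ⊆ {x} := Finpartition.le _ hb
  calc b.card ≤ ({x} : Finset α).card := Finset.card_le_card hle
  _ ≤ 2 := by simp

lemma restrictedBell_zero : restrictedBell 0 2 = 1 := by
  unfold restrictedBell
  have : (Finset.univ : Finset (Fin 0)) = ∅ := rfl
  rw [this]
  exact card_part_le_two_empty

open Finset



lemma restrictedBell_eq_pc (i : ℕ) : restrictedBell i 2 = pc (Finset.range i) := by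
  rcases Nat.eq_zero_or_pos i with rfl | hi
  · have h1 : (Finset.univ : Finset (Fin 0)) = ∅ := rfl
    have h2 : Finset.range 0 = ∅ := rfl
    unfold restrictedBell pc
    rw [h1, h2, card_part_le_two_empty, card_part_le_two_empty]
  · unfold restrictedBell pc
    refine card_part_le_two_congr (fun x : Fin i => (x : ℕ))
      (fun y => ⟨y % i, Nat.mod_lt _ hi⟩) ?_ ?_
    · ext y
      simp only [Finset.mem_image, Finset.mem_univ, true_and, Finset.mem_range]
      exact ⟨by rintro ⟨x, rfl⟩; exact x.isLt, fun h => ⟨⟨y, h⟩, rfl⟩⟩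
    · intro x _
      exact Fin.ext (Nat.mod_eq_of_lt x.isLt)

lemma pc_erase (n b : ℕ) (hb : b ≤ n) :
    pc ((Finset.range (n+1)).erase b) = pc (Finset.range n) := by
  unfold pc
  refine (card_part_le_two_congr (fun x => if x < b then x else x + 1)
      (fun y => if y < b then y else y - 1) ?_ ?_).symm
  · ext y
    simp only [Finset.mem_image, Finset.mem_range, Finset.mem_erase]
    constructor
    · rintro ⟨x, hx, rfl⟩
      split_ifs with h <;> omega
    · rintro ⟨hyb, hy⟩
      refine ⟨if y < b then y else y - 1, ?_, ?_⟩ <;> split_ifs <;> omega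
  · intro x hx
    rw [Finset.mem_range] at hx
    show (if (if x < b then x else x + 1) < b then (if x < b then x else x + 1)
      else (if x < b then x else x + 1) - 1) = x
    split_ifs <;> omega

open Finset


/-- Reinserting the avoided part. -/
lemma insert_avoid_parts {s : Finset ℕ} (Q : Finpartition s) {T : Finset ℕ}
    (hT : T ∈ Q.parts) : insert T (Q.avoid T).parts = Q.parts := by
  ext c
  simp only [Finset.mem_insert, Finpartition.mem_avoid]
  constructor
  · rintro (rfl | ⟨d, hd, hdT, rfl⟩)
    · exact hT
    · have hdne : d ≠ T := fun h => hdT (h ▸ le_refl _)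
      have hdisj : Disjoint d T := Q.disjoint hd hT hdne
      rw [Finset.sdiff_eq_self_iff_disjoint.2 hdisj]
      exact hd
  · intro hc
    by_cases h : c = T
    · exact Or.inl h
    · refine Or.inr ⟨c, hc, ?_, ?_⟩
      · intro hsub
        exact Q.bot_notMem (((Q.disjoint hc hT h).eq_bot_of_le hsub) ▸ hc)
      · exact Finset.sdiff_eq_self_iff_disjoint.2 (Q.disjoint hc hT h)

section Rec

variable (n : ℕ)

lemma hs1 : Finset.range (n+1) ⊔ ({n+1} : Finset ℕ) = Finset.range (n+2) := by
  ext x; simp [Finset.sup_eq_union]; omega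

lemma hd1 : Disjoint (Finset.range (n+1)) ({n+1} : Finset ℕ) := by
  simp

lemma hb1 : ({n+1} : Finset ℕ) ≠ ⊥ := by
  simp [Finset.bot_eq_empty]

variable {n} in
lemma hs2 (b : Fin (n+1)) :
    (Finset.range (n+1)).erase (b : ℕ) ⊔ ({n+1, (b : ℕ)} : Finset ℕ) = Finset.range (n+2) := by
  have := b.isLt
  ext x; simp [Finset.sup_eq_union]; omega

variable {n} in
lemma hd2 (b : Fin (n+1)) :
    Disjoint ((Finset.range (n+1)).erase (b : ℕ)) ({n+1, (b : ℕ)} : Finset ℕ) := by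
  rw [Finset.disjoint_right]
  intro x hx
  simp only [Finset.mem_insert, Finset.mem_singleton] at hx
  rcases hx with rfl | rfl <;> simp [Finset.mem_erase]

variable {n} in
lemma hb2 (b : Fin (n+1)) : ({n+1, (b : ℕ)} : Finset ℕ) ≠ ⊥ := by
  simp [Finset.bot_eq_empty]

/-- The inverse map of the recurrence bijection. -/
noncomputable def back :
    ({P : Finpartition (Finset.range (n+1)) // ∀ b ∈ P.parts, b.card ≤ 2} ⊕
      Σ b : Fin (n+1), {P : Finpartition ((Finset.range (n+1)).erase (b : ℕ)) //
        ∀ c ∈ P.parts, c.card ≤ 2}) →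
    {P : Finpartition (Finset.range (n+2)) // ∀ b ∈ P.parts, b.card ≤ 2}
  | Sum.inl ⟨P, hP⟩ => ⟨P.extend (hb1 n) (hd1 n) (hs1 n), by
      intro c hc
      rw [Finpartition.extend_parts, Finset.mem_insert] at hc
      rcases hc with rfl | hc
      · simp
      · exact hP c hc⟩
  | Sum.inr ⟨b, P, hP⟩ => ⟨P.extend (hb2 b) (hd2 b) (hs2 b), by
      intro c hc
      rw [Finpartition.extend_parts, Finset.mem_insert] at hc
      rcases hc with rfl | hc
      · exact (Finset.card_insert_le _ _).trans (by simp)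
      · exact hP c hc⟩

lemma not_mem_parts_of_top {P : Finpartition (Finset.range (n+1))} {c : Finset ℕ}
    (hc : c ∈ P.parts) : (n+1) ∉ c := by
  intro h
  have := P.le hc h
  rw [Finset.mem_range] at this
  omega

variable {n} in
lemma not_mem_parts_of_top' {b : Fin (n+1)}
    {P : Finpartition ((Finset.range (n+1)).erase (b : ℕ))} {c : Finset ℕ}
    (hc : c ∈ P.parts) : (n+1) ∉ c := by
  intro h
  have := P.le hc h
  rw [Finset.mem_erase, Finset.mem_range] at this
  omega

lemma back_injective : Function.Injective (back n) := by
  rintro (⟨P, hP⟩ | ⟨b, P, hP⟩) (⟨P', hP'⟩ | ⟨b', P', hP'⟩) hxy <;>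
    have hparts := congrArg (fun x => (Subtype.val x).parts) hxy <;>
    simp only [back, Finpartition.extend_parts] at hparts
  · have h1 : ({n+1} : Finset ℕ) ∉ P.parts := fun h => not_mem_parts_of_top n h (by simp)
    have h2 : ({n+1} : Finset ℕ) ∉ P'.parts := fun h => not_mem_parts_of_top n h (by simp)
    have : P.parts = P'.parts := by
      rw [← Finset.erase_insert h1, hparts, Finset.erase_insert h2]
    exact congrArg Sum.inl (Subtype.ext (Finpartition.ext this))
  · exfalso
    have hmem : ({n+1} : Finset ℕ) ∈ insert ({n+1, (b':ℕ)} : Finset ℕ) P'.parts := by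
      rw [← hparts]; exact Finset.mem_insert_self _ _
    rcases Finset.mem_insert.1 hmem with h | h
    · have : (b' : ℕ) ∈ ({n+1} : Finset ℕ) := by rw [h]; simp
      rw [Finset.mem_singleton] at this
      have := b'.isLt; omega
    · exact not_mem_parts_of_top' h (by simp)
  · exfalso
    have hmem : ({n+1} : Finset ℕ) ∈ insert ({n+1, (b:ℕ)} : Finset ℕ) P.parts := by
      rw [hparts]; exact Finset.mem_insert_self _ _
    rcases Finset.mem_insert.1 hmem with h | h
    · have : (b : ℕ) ∈ ({n+1} : Finset ℕ) := by rw [h]; simp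
      rw [Finset.mem_singleton] at this
      have := b.isLt; omega
    · exact not_mem_parts_of_top' h (by simp)
  · have hmem : ({n+1, (b:ℕ)} : Finset ℕ) ∈ insert ({n+1, (b':ℕ)} : Finset ℕ) P'.parts := by
      rw [← hparts]; exact Finset.mem_insert_self _ _
    have hBB : ({n+1, (b:ℕ)} : Finset ℕ) = {n+1, (b':ℕ)} := by
      rcases Finset.mem_insert.1 hmem with h | h
      · exact h
      · exact absurd (by simp : (n+1) ∈ ({n+1, (b:ℕ)} : Finset ℕ)) (not_mem_parts_of_top' h)
    have hbb : b = b' := by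
      have hb'mem : (b : ℕ) ∈ ({n+1, (b':ℕ)} : Finset ℕ) := by
        rw [← hBB]; simp
      simp only [Finset.mem_insert, Finset.mem_singleton] at hb'mem
      rcases hb'mem with h | h
      · have := b.isLt; omega
      · exact Fin.ext h
    subst hbb
    have h1 : ({n+1, (b:ℕ)} : Finset ℕ) ∉ P.parts :=
      fun h => not_mem_parts_of_top' h (by simp)
    have h2 : ({n+1, (b:ℕ)} : Finset ℕ) ∉ P'.parts :=
      fun h => not_mem_parts_of_top' h (by simp)
    have : P.parts = P'.parts := by
      rw [← Finset.erase_insert h1, hparts, Finset.erase_insert h2]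
    exact congrArg Sum.inr (congrArg (Sigma.mk b) (Subtype.ext (Finpartition.ext this)))


lemma back_surjective : Function.Surjective (back n) := by
  rintro ⟨Q, hQ⟩
  have ha : (n+1) ∈ Finset.range (n+2) := by simp
  set T := Q.part (n+1) with hTdef
  have hT : T ∈ Q.parts := Q.part_mem.2 ha
  have haT : (n+1) ∈ T := Q.mem_part ha
  by_cases hc : T = {n+1}
  · -- singleton case
    have h1 : Finset.range (n+2) \ ({n+1} : Finset ℕ) = Finset.range (n+1) := by
      ext x; simp [Finset.mem_sdiff]; omega
    refine ⟨Sum.inl ⟨(Q.avoid {n+1}).copy h1, ?_⟩, ?_⟩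
    · intro c hcc
      rw [Finpartition.copy_parts] at hcc
      rw [Finpartition.mem_avoid] at hcc
      obtain ⟨d, hd, -, rfl⟩ := hcc
      exact (Finset.card_le_card (Finset.sdiff_subset)).trans (hQ d hd)
    · apply Subtype.ext
      apply Finpartition.ext
      show insert ({n+1} : Finset ℕ) ((Q.avoid {n+1}).copy h1).parts = Q.parts
      rw [Finpartition.copy_parts, ← hc]
      rw [hc] at hT
      have := insert_avoid_parts Q hT
      rw [← hc] at hT
      rw [hc]
      exact this
  · -- pair case
    have hne : (T.erase (n+1)).Nonempty := by
      rw [Finset.nonempty_iff_ne_empty]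
      intro h
      rw [Finset.erase_eq_empty_iff] at h
      rcases h with h' | h'
      · exact Q.bot_notMem (by rw [Finset.bot_eq_empty, ← h']; exact hT)
      · exact hc h'
    set b := (T.erase (n+1)).min' hne with hbdef
    have hbT : b ∈ T.erase (n+1) := Finset.min'_mem _ _
    rw [Finset.mem_erase] at hbT
    have hbrange : b < n+1 := by
      have := Q.le hT hbT.2
      rw [Finset.mem_range] at this
      omega
    have hT2 : T = {n+1, b} := by
      refine (Finset.eq_of_subset_of_card_le ?_ ?_).symm
      · exact Finset.insert_subset haT (Finset.singleton_subset_iff.2 hbT.2)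
      · calc T.card ≤ 2 := hQ T hT
          _ = ({n+1, b} : Finset ℕ).card := (Finset.card_pair (by omega)).symm
    have h2 : Finset.range (n+2) \ T = (Finset.range (n+1)).erase b := by
      rw [hT2]; ext x; simp [Finset.mem_sdiff, Finset.mem_erase]; omega
    refine ⟨Sum.inr ⟨⟨b, hbrange⟩, ⟨(Q.avoid T).copy h2, ?_⟩⟩, ?_⟩
    · intro c hcc
      rw [Finpartition.copy_parts] at hcc
      rw [Finpartition.mem_avoid] at hcc
      obtain ⟨d, hd, -, rfl⟩ := hcc
      exact (Finset.card_le_card (Finset.sdiff_subset)).trans (hQ d hd)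
    · apply Subtype.ext
      apply Finpartition.ext
      show insert ({n+1, b} : Finset ℕ) ((Q.avoid T).copy h2).parts = Q.parts
      rw [Finpartition.copy_parts, ← hT2]
      exact insert_avoid_parts Q hT

lemma pc_rec : pc (Finset.range (n+2)) = pc (Finset.range (n+1)) + (n+1) * pc (Finset.range n) := by
  have hbij : Function.Bijective (back n) := ⟨back_injective n, back_surjective n⟩
  have hcard := Nat.card_eq_of_bijective _ hbij
  unfold pc
  rw [← hcard, Nat.card_sum]
  congr 1
  rw [Nat.card_eq_fintype_card, Fintype.card_sigma]
  have h2 : ∀ b : Fin (n+1),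
      Fintype.card {P : Finpartition ((Finset.range (n+1)).erase (b : ℕ)) //
        ∀ c ∈ P.parts, c.card ≤ 2} =
      Nat.card {P : Finpartition (Finset.range n) // ∀ b ∈ P.parts, b.card ≤ 2} := by
    intro b
    rw [← Nat.card_eq_fintype_card]
    exact pc_erase n b (by omega)
  rw [Finset.sum_congr rfl (fun b _ => h2 b), Finset.sum_const, Finset.card_univ,
    Fintype.card_fin, smul_eq_mul]

end Rec

open Finset


lemma rB0 : restrictedBell 0 2 = 1 := restrictedBell_zero

lemma rB1 : restrictedBell 1 2 = 1 := by
  rw [restrictedBell_eq_pc, Finset.range_one]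
  exact card_part_le_two_singleton 0

lemma rBrec (n : ℕ) :
    restrictedBell (n+2) 2 = restrictedBell (n+1) 2 + (n+1) * restrictedBell n 2 := by
  rw [restrictedBell_eq_pc, restrictedBell_eq_pc, restrictedBell_eq_pc]
  exact pc_rec n


noncomputable def aQ (k : ℕ) : ℚ := (restrictedBell k 2 : ℚ)

lemma aQ0 : aQ 0 = 1 := by simp [aQ, rB0]
lemma aQ1 : aQ 1 = 1 := by simp [aQ, rB1]
lemma aQrec (n : ℕ) : aQ (n+2) = aQ (n+1) + (n+1) * aQ n := by
  unfold aQ; rw [rBrec]; push_cast; ring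

noncomputable def Tt (n : ℕ) : ℚ :=
  ∑ i ∈ Finset.range (n+1), (-1:ℚ)^i * (n.choose i) * aQ i

noncomputable def Ss (n : ℕ) : ℚ :=
  ∑ i ∈ Finset.range (n+1), (-1:ℚ)^i * (n.choose i) * aQ (i+1)

lemma Tt0 : Tt 0 = 1 := by simp [Tt, aQ0]
lemma Tt1 : Tt 1 = 0 := by
  unfold Tt
  rw [show (1:ℕ)+1 = 2 from rfl, Finset.sum_range_succ, Finset.sum_range_one]
  simp [aQ0, aQ1]

lemma TtS (n : ℕ) : Tt (n+1) = Tt n - Ss n := by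
  have h1 : Tt (n+1) =
      ∑ i ∈ Finset.range (n+1), (-1:ℚ)^(i+1) * ((n+1).choose (i+1)) * aQ (i+1) +
        (-1:ℚ)^0 * ((n+1).choose 0) * aQ 0 :=
    Finset.sum_range_succ' _ _
  have hsplit : ∀ i ∈ Finset.range (n+1),
      (-1:ℚ)^(i+1) * ((n+1).choose (i+1)) * aQ (i+1) =
      -((-1:ℚ)^i * (n.choose i) * aQ (i+1)) + (-1:ℚ)^(i+1) * (n.choose (i+1)) * aQ (i+1) := by
    intro i _
    rw [Nat.choose_succ_succ]
    push_cast
    ring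
  rw [Finset.sum_congr rfl hsplit, Finset.sum_add_distrib, Finset.sum_neg_distrib] at h1
  have h2 : ∑ i ∈ Finset.range (n+2), (-1:ℚ)^i * (n.choose i) * aQ i =
      ∑ i ∈ Finset.range (n+1), (-1:ℚ)^(i+1) * (n.choose (i+1)) * aQ (i+1) +
        (-1:ℚ)^0 * (n.choose 0) * aQ 0 :=
    Finset.sum_range_succ' _ _
  have h3 : ∑ i ∈ Finset.range (n+2), (-1:ℚ)^i * (n.choose i) * aQ i = Tt n := by
    rw [Finset.sum_range_succ]
    unfold Tt
    rw [Nat.choose_succ_self]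
    simp
  rw [h3] at h2
  unfold Ss
  simp only [pow_zero, Nat.choose_zero_right, Nat.cast_one, one_mul] at h1 h2
  linarith

lemma SsT (n : ℕ) : Ss (n+1) = Tt (n+1) - (n+1) * Tt n := by
  have h1 : Ss (n+1) =
      ∑ i ∈ Finset.range (n+1), (-1:ℚ)^(i+1) * ((n+1).choose (i+1)) * aQ (i+1+1) +
        (-1:ℚ)^0 * ((n+1).choose 0) * aQ (0+1) :=
    Finset.sum_range_succ' _ _
  have hsplit : ∀ i ∈ Finset.range (n+1),
      (-1:ℚ)^(i+1) * ((n+1).choose (i+1)) * aQ (i+1+1) =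
      (-1:ℚ)^(i+1) * ((n+1).choose (i+1)) * aQ (i+1) +
        -((n+1) * ((-1:ℚ)^i * (n.choose i) * aQ i)) := by
    intro i _
    rw [show i+1+1 = i+2 from rfl, aQrec i]
    have hcn : (n+1) * n.choose i = (n+1).choose (i+1) * (i+1) := Nat.add_one_mul_choose_eq n i
    have hc : ((n+1).choose (i+1) : ℚ) * (i+1) = (n+1) * (n.choose i) := by
      exact_mod_cast hcn.symm
    push_cast
    linear_combination ((-1:ℚ)^(i+1) * aQ i) * hc
  rw [Finset.sum_congr rfl hsplit, Finset.sum_add_distrib, Finset.sum_neg_distrib,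
    ← Finset.mul_sum] at h1
  have h2 : Tt (n+1) =
      ∑ i ∈ Finset.range (n+1), (-1:ℚ)^(i+1) * ((n+1).choose (i+1)) * aQ (i+1) +
        (-1:ℚ)^0 * ((n+1).choose 0) * aQ 0 :=
    Finset.sum_range_succ' _ _
  have h3 : (Tt n) = ∑ i ∈ Finset.range (n+1), (-1:ℚ)^i * (n.choose i) * aQ i := rfl
  rw [← h3] at h1
  rw [show (0+1 : ℕ) = 1 from rfl] at h1
  simp only [pow_zero, Nat.choose_zero_right, Nat.cast_one, one_mul, aQ0, aQ1] at h1 h2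
  linarith

lemma Ttrec (n : ℕ) : Tt (n+2) = (n+1) * Tt n := by
  have := TtS (n+1)
  rw [SsT n] at this
  linarith

lemma Tt_even (k : ℕ) : Tt (2*k) = ((2*k).factorial : ℚ) / (2^k * (k.factorial : ℚ)) ∧
    Tt (2*k+1) = 0 := by
  induction k with
  | zero => simpa using ⟨Tt0, Tt1⟩
  | succ k ih =>
    obtain ⟨ih1, ih2⟩ := ih
    constructor
    · have h1 : 2*(k+1) = (2*k) + 2 := by ring
      rw [h1, Ttrec, ih1]
      have h2 : ((2*k) + 2).factorial = ((2*k)+2) * (((2*k)+1) * (2*k).factorial) := by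
        rw [Nat.factorial_succ, Nat.factorial_succ]
      have h3 : (k+1).factorial = (k+1) * k.factorial := Nat.factorial_succ k
      rw [h2, h3]
      have hk2 : ((2:ℚ)^k) ≠ 0 := by positivity
      have hkf : ((k.factorial : ℚ)) ≠ 0 := by
        exact_mod_cast Nat.factorial_ne_zero k
      push_cast
      field_simp
      ring
    · have h1 : 2*(k+1)+1 = (2*k+1) + 2 := by ring
      rw [h1, Ttrec, ih2, mul_zero]

end Aux

/-- The alternating binomial transform of the restricted Bell numbers `B_{n,≤2}` equals the
aerated double factorial: `n!/(2^{n/2} (n/2)!)` for even `n`, and `0` for odd `n`. -/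
theorem alternating_binomial_transform_restrictedBell_two (n : ℕ) :
    ∑ i ∈ Finset.range (n + 1), (-1 : ℚ) ^ i * (n.choose i) * restrictedBell i 2 =
      if Even n then (n.factorial : ℚ) / (2 ^ (n / 2) * (n / 2).factorial) else 0 := by
  have hT : ∑ i ∈ Finset.range (n + 1), (-1 : ℚ) ^ i * (n.choose i) * restrictedBell i 2
      = Tt n := rfl
  rw [hT]
  rcases Nat.even_or_odd n with he | ho
  · obtain ⟨k, hk⟩ := he
    have h2 : n = 2 * k := by omega
    subst h2
    rw [if_pos (by exact ⟨k, by ring⟩)]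
    have hdiv : 2 * k / 2 = k := by omega
    rw [hdiv]
    exact (Tt_even k).1
  · obtain ⟨k, hk⟩ := ho
    subst hk
    rw [if_neg (by intro h; rw [Nat.even_iff] at h; omega)]
    exact (Tt_even k).2
end

section
/- For every natural number n, the determinant of the (n+1)×(n+1) Hankel matrix whose (i,j) entry (for 0 ≤ i,j ≤ n) is B_{i+j,≤2} equals the superfactorial ∏_{i=0}^{n} i!. -/
open Function


/-- Involutive self-maps of a type. -/
abbrev Invol (α : Type*) := {f : α → α // Function.Involutive f}

noncomputable def ic (α : Type*) : ℕ := Nat.card (Invol α)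

def involCongr {α β : Type*} (e : α ≃ β) : Invol α ≃ Invol β where
  toFun f := ⟨e ∘ f.1 ∘ e.symm, fun x => by simp [f.2 (e.symm x)]⟩
  invFun g := ⟨e.symm ∘ g.1 ∘ e, fun x => by simp [g.2 (e x)]⟩
  left_inv f := by ext x; simp
  right_inv g := by ext x; simp

lemma ic_congr {α β : Type*} (e : α ≃ β) : ic α = ic β :=
  Nat.card_congr (involCongr e)

/-- Involutions fixing `a` correspond to involutions of the complement of `a`. -/
def involFixEquiv {α : Type*} [DecidableEq α] (a : α) :
    {f : Invol α // f.1 a = a} ≃ Invol {x : α // x ≠ a} where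
  toFun f := ⟨fun x => ⟨f.1.1 x.1, fun h => x.2 (by
      have := f.1.2 x.1; rw [h, f.2] at this; exact this.symm)⟩,
    fun x => Subtype.ext (f.1.2 x.1)⟩
  invFun g := ⟨⟨fun x => if h : x = a then a else (g.1 ⟨x, h⟩).1, fun x => by
      by_cases h : x = a
      · simp [h]
      · simp only [dif_neg h, dif_neg (g.1 ⟨x, h⟩).2]
        rw [show (⟨(g.1 ⟨x, h⟩).1, (g.1 ⟨x, h⟩).2⟩ : {x : α // x ≠ a}) = g.1 ⟨x, h⟩ from rfl,
          g.2 ⟨x, h⟩]⟩, by simp⟩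
  left_inv f := by
    apply Subtype.ext; apply Subtype.ext; funext x
    by_cases h : x = a
    · simp [h, f.2]
    · simp [h]
  right_inv g := by
    apply Subtype.ext; funext x
    apply Subtype.ext
    simp [x.2]

/-- Involutions sending `a` to `b ≠ a` correspond to involutions of the complement of `{a,b}`. -/
def involSwapEquiv {α : Type*} [DecidableEq α] (a b : α) (hab : a ≠ b) :
    {f : Invol α // f.1 a = b} ≃ Invol {x : α // x ≠ a ∧ x ≠ b} where
  toFun f := ⟨fun x => ⟨f.1.1 x.1,
      ⟨fun h => x.2.2 (by have := f.1.2 x.1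
                          rw [h, show f.1.1 a = b from f.2] at this; exact this.symm),
       fun h => x.2.1 (by have := f.1.2 x.1
                          have hba : f.1.1 b = a := by
                            have h2 := f.1.2 a; rwa [f.2] at h2
                          rw [h, hba] at this; exact this.symm)⟩⟩,
    fun x => Subtype.ext (f.1.2 x.1)⟩
  invFun g := ⟨⟨fun x => if h : x = a then b else if h' : x = b then a
        else (g.1 ⟨x, h, h'⟩).1, fun x => by
      by_cases h : x = a
      · simp [h, hab.symm]
      · by_cases h' : x = b
        · simp [h', hab]
        · simp only [dif_neg h, dif_neg h', dif_neg (g.1 ⟨x, h, h'⟩).2.1,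
            dif_neg (g.1 ⟨x, h, h'⟩).2.2]
          rw [show (⟨(g.1 ⟨x, h, h'⟩).1, (g.1 ⟨x, h, h'⟩).2⟩ : {x : α // x ≠ a ∧ x ≠ b})
              = g.1 ⟨x, h, h'⟩ from rfl, g.2 ⟨x, h, h'⟩]⟩, by simp [hab.symm]⟩
  left_inv f := by
    apply Subtype.ext; apply Subtype.ext; funext x
    by_cases h : x = a
    · simp [h, f.2]
    · by_cases h' : x = b
      · have hba : f.1.1 b = a := by have h2 := f.1.2 a; rwa [f.2] at h2
        simp [h', hba]
      · simp [h, h']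
  right_inv g := by
    apply Subtype.ext; funext x
    apply Subtype.ext
    simp [x.2.1, x.2.2]

instance {α : Type*} [DecidableEq α] [Fintype α] :
    DecidablePred (Function.Involutive : (α → α) → Prop) := fun f =>
  decidable_of_iff (∀ x, f (f x) = x) Iff.rfl

instance {α : Type*} [DecidableEq α] [Fintype α] : Fintype (Invol α) :=
  Subtype.fintype _

lemma nat_card_sigma {ι : Type*} [Fintype ι] (β : ι → Type*) [∀ i, Finite (β i)] :
    Nat.card (Σ i, β i) = ∑ i, Nat.card (β i) := by
  letI : ∀ i, Fintype (β i) := fun i => Fintype.ofFinite _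
  simp only [Nat.card_eq_fintype_card, Fintype.card_sigma]

lemma ic_fin_zero : ic (Fin 0) = 1 := by
  have : Subsingleton (Invol (Fin 0)) :=
    ⟨fun f g => Subtype.ext (funext fun x => x.elim0)⟩
  have : Nonempty (Invol (Fin 0)) := ⟨⟨id, fun x => rfl⟩⟩
  exact Nat.card_eq_one_iff_unique.2 ⟨‹_›, ‹_›⟩

lemma ic_fin_one : ic (Fin 1) = 1 := by
  have : Subsingleton (Invol (Fin 1)) :=
    ⟨fun f g => Subtype.ext (funext fun x => Subsingleton.elim _ _)⟩
  have : Nonempty (Invol (Fin 1)) := ⟨⟨id, fun x => rfl⟩⟩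
  exact Nat.card_eq_one_iff_unique.2 ⟨‹_›, ‹_›⟩

lemma card_ne {m : ℕ} (a : Fin (m + 1)) :
    Fintype.card {x : Fin (m + 1) // x ≠ a} = m := by
  simp [Fintype.card_subtype_compl]

lemma card_ne_ne {m : ℕ} (a b : Fin (m + 2)) (hab : a ≠ b) :
    Fintype.card {x : Fin (m + 2) // x ≠ a ∧ x ≠ b} = m := by
  rw [Fintype.card_subtype]
  have : (Finset.univ.filter fun x : Fin (m + 2) => x ≠ a ∧ x ≠ b)
      = Finset.univ \ {a, b} := by
    ext x; simp [not_or, and_comm]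
  rw [this, Finset.card_sdiff_of_subset (by simp)]
  simp [Finset.card_pair hab]

lemma ic_fin_rec (n : ℕ) :
    ic (Fin (n + 2)) = ic (Fin (n + 1)) + (n + 1) * ic (Fin n) := by
  classical
  set a : Fin (n + 2) := Fin.last (n + 1) with ha
  -- fiber decomposition
  have h1 : ic (Fin (n + 2)) = ∑ x : Fin (n + 2), Nat.card {f : Invol (Fin (n + 2)) // f.1 a = x} := by
    rw [ic, ← Nat.card_congr (Equiv.sigmaFiberEquiv (fun f : Invol (Fin (n + 2)) => f.1 a)),
      nat_card_sigma]
  have hfix : Nat.card {f : Invol (Fin (n + 2)) // f.1 a = a} = ic (Fin (n + 1)) := by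
    rw [Nat.card_congr (involFixEquiv a)]
    rw [← ic]
    exact ic_congr (Fintype.equivFinOfCardEq (card_ne a))
  have hswap : ∀ x : Fin (n + 2), x ≠ a →
      Nat.card {f : Invol (Fin (n + 2)) // f.1 a = x} = ic (Fin n) := by
    intro x hx
    rw [Nat.card_congr (involSwapEquiv a x (Ne.symm hx))]
    rw [← ic]
    exact ic_congr (Fintype.equivFinOfCardEq (card_ne_ne a x (Ne.symm hx)))
  rw [h1, ← Finset.add_sum_erase _ _ (Finset.mem_univ a), hfix]
  congr 1
  rw [Finset.sum_congr rfl (fun x hx => hswap x (Finset.ne_of_mem_erase hx))]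
  rw [Finset.sum_const, Finset.card_erase_of_mem (Finset.mem_univ a)]
  simp [Fintype.card_fin]

open Finset in
lemma Finpartition.eq_of_part_eq {α : Type*} [Fintype α] [DecidableEq α]
    {P Q : Finpartition (Finset.univ : Finset α)} (h : ∀ a, P.part a = Q.part a) : P = Q := by
  ext t
  constructor
  · intro ht
    obtain ⟨a, ha⟩ := P.nonempty_of_mem_parts ht
    rw [← P.part_eq_of_mem ht ha, h]
    exact Q.part_mem.2 (Finset.mem_univ a)
  · intro ht
    obtain ⟨a, ha⟩ := Q.nonempty_of_mem_parts ht
    rw [← Q.part_eq_of_mem ht ha, ← h]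
    exact P.part_mem.2 (Finset.mem_univ a)

/-- The setoid associated to an involution. -/
def involSetoid {α : Type*} (f : Invol α) : Setoid α where
  r a b := b = a ∨ b = f.1 a
  iseqv := by
    constructor
    · intro a; exact Or.inl rfl
    · rintro a b (rfl | rfl)
      · exact Or.inl rfl
      · exact Or.inr (f.2 a).symm
    · rintro a b c (rfl | rfl) h <;> [exact h; skip]
      rcases h with rfl | rfl
      · exact Or.inr rfl
      · exact Or.inl (f.2 a)

instance {α : Type*} [DecidableEq α] (f : Invol α) : DecidableRel (involSetoid f).r :=
  fun _ _ => inferInstanceAs (Decidable (_ ∨ _))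

noncomputable def partitionOfInvol {α : Type*} [Fintype α] [DecidableEq α] (f : Invol α) :
    Finpartition (Finset.univ : Finset α) :=
  Finpartition.ofSetoid (involSetoid f)

lemma mem_part_partitionOfInvol {α : Type*} [Fintype α] [DecidableEq α] (f : Invol α)
    (a b : α) : b ∈ (partitionOfInvol f).part a ↔ b = a ∨ b = f.1 a :=
  Finpartition.mem_part_ofSetoid_iff_rel

lemma partitionOfInvol_parts_le {α : Type*} [Fintype α] [DecidableEq α] (f : Invol α) :
    ∀ b ∈ (partitionOfInvol f).parts, b.card ≤ 2 := by
  intro t ht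
  obtain ⟨a, ha⟩ := (partitionOfInvol f).nonempty_of_mem_parts ht
  rw [← (partitionOfInvol f).part_eq_of_mem ht ha]
  have hsub : (partitionOfInvol f).part a ⊆ insert a {f.1 a} := by
    intro b hb
    rcases (mem_part_partitionOfInvol f a b).1 hb with rfl | rfl
    · exact Finset.mem_insert_self _ _
    · exact Finset.mem_insert_of_mem (Finset.mem_singleton_self _)
  calc ((partitionOfInvol f).part a).card ≤ (insert a ({f.1 a} : Finset α)).card :=
        Finset.card_le_card hsub
    _ ≤ 2 := (Finset.card_insert_le _ _).trans (by simp)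

lemma partitionOfInvol_injective {α : Type*} [Fintype α] [DecidableEq α] :
    Function.Injective (partitionOfInvol (α := α)) := by
  intro f g hfg
  have key : ∀ a b : α, (b = a ∨ b = f.1 a) ↔ (b = a ∨ b = g.1 a) := by
    intro a b
    rw [← mem_part_partitionOfInvol f a b, ← mem_part_partitionOfInvol g a b, hfg]
  apply Subtype.ext; funext a
  have h1 := (key a (f.1 a)).1 (Or.inr rfl)
  have h2 := (key a (g.1 a)).2 (Or.inr rfl)
  rcases h1 with h1 | h1
  · rcases h2 with h2 | h2
    · rw [h1, h2]
    · exact h2.symm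
  · exact h1

lemma partitionOfInvol_surjective {α : Type*} [Fintype α] [DecidableEq α]
    (P : Finpartition (Finset.univ : Finset α)) (hP : ∀ b ∈ P.parts, b.card ≤ 2) :
    ∃ f : Invol α, partitionOfInvol f = P := by
  classical
  set F : α → α := fun a =>
    if h : ∃ b ∈ P.part a, b ≠ a then h.choose else a with hF
  have hmem : ∀ a, F a ∈ P.part a := by
    intro a
    by_cases h : ∃ b ∈ P.part a, b ≠ a
    · simp only [hF, dif_pos h]; exact h.choose_spec.1
    · simp only [hF, dif_neg h]; exact P.mem_part (Finset.mem_univ a)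
  have key : ∀ a b : α, b ∈ P.part a ↔ b = a ∨ b = F a := by
    intro a b
    constructor
    · intro hb
      by_cases hba : b = a
      · exact Or.inl hba
      · have h : ∃ c ∈ P.part a, c ≠ a := ⟨b, hb, hba⟩
        have hFa : F a = h.choose := by simp only [hF, dif_pos h]
        have hch := h.choose_spec
        -- part a = {a, b}
        have hsub : insert a {b} ⊆ P.part a := by
          intro x hx
          rcases Finset.mem_insert.1 hx with rfl | hx
          · exact P.mem_part (Finset.mem_univ x)
          · rw [Finset.mem_singleton.1 hx]; exact hb
        have hcard : (insert a ({b} : Finset α)).card = 2 := by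
          rw [Finset.card_insert_of_notMem (by simp [Ne.symm hba])]; simp
        have heq : P.part a = insert a {b} :=
          (Finset.eq_of_subset_of_card_le hsub
            (by rw [hcard]; exact hP _ (P.part_mem.2 (Finset.mem_univ a)))).symm
        have : F a ∈ insert a ({b} : Finset α) := heq ▸ hmem a
        rcases Finset.mem_insert.1 this with h' | h'
        · exact absurd (hFa.symm.trans h') hch.2
        · exact Or.inr (Finset.mem_singleton.1 h').symm
    · rintro (rfl | rfl)
      · exact P.mem_part (Finset.mem_univ b)
      · exact hmem a
  have hinv : Function.Involutive F := by
    intro a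
    by_cases hfa : F a = a
    · rw [hfa, hfa]
    · have hpart : P.part (F a) = P.part a :=
        P.part_eq_of_mem (P.part_mem.2 (Finset.mem_univ a)) (hmem a)
      have ha_mem : a ∈ P.part (F a) := by
        rw [hpart]; exact P.mem_part (Finset.mem_univ a)
      rcases (key (F a) a).1 ha_mem with h | h
      · exact h.symm ▸ (by rw [← h] at hfa ⊢; exact absurd rfl hfa)
      · exact h.symm
  refine ⟨⟨F, hinv⟩, ?_⟩
  apply Finpartition.eq_of_part_eq
  intro a
  ext b
  rw [mem_part_partitionOfInvol, key a b]

lemma restrictedBell_two_eq_ic (n : ℕ) : restrictedBell n 2 = ic (Fin n) := by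
  rw [restrictedBell, ic]
  refine (Nat.card_eq_of_bijective
    (fun f => ⟨partitionOfInvol f, partitionOfInvol_parts_le f⟩) ?_).symm
  constructor
  · intro f g h
    exact partitionOfInvol_injective (congrArg Subtype.val h)
  · rintro ⟨P, hP⟩
    obtain ⟨f, hf⟩ := partitionOfInvol_surjective P hP
    exact ⟨f, Subtype.ext hf⟩

/-! ### Part B: the summation identity -/

/-- The involution numbers. -/
noncomputable def invc (n : ℕ) : ℕ := ic (Fin n)

lemma invc_zero : invc 0 = 1 := ic_fin_zero
lemma invc_one : invc 1 = 1 := ic_fin_one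
lemma invc_add_two (n : ℕ) : invc (n + 2) = invc (n + 1) + (n + 1) * invc n := ic_fin_rec n

lemma invc_rec (m : ℕ) : invc (m + 1) = invc m + m * invc (m - 1) := by
  cases m with
  | zero => simp [invc_zero, invc_one]
  | succ t => simpa using invc_add_two t

lemma invc_rec' (a b : ℕ) :
    invc (a + 1 - b) = invc (a - b) + (a - b) * invc (a - b - 1) := by
  rcases le_or_gt b a with h | h
  · rw [show a + 1 - b = (a - b) + 1 by omega]
    exact invc_rec (a - b)
  · rw [show a + 1 - b = 0 by omega, show a - b = 0 by omega]
    simp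

/-- The summand of the Hankel entry expansion. -/
noncomputable def hterm (i j k : ℕ) : ℕ :=
  i.choose k * j.choose k * k.factorial * invc (i - k) * invc (j - k)

lemma hterm_eq_zero {i j k : ℕ} (h : i < k) : hterm i j k = 0 := by
  simp [hterm, Nat.choose_eq_zero_of_lt h]

noncomputable def uterm (i j k : ℕ) : ℕ :=
  (i - k) * (i.choose k * j.choose k * k.factorial * invc (i - k - 1) * invc (j - k))

noncomputable def wterm (i j k : ℕ) : ℕ :=
  (j - k) * (i.choose k * j.choose k * k.factorial * invc (i - k) * invc (j - k - 1))

lemma wterm_eq_zero {i j k : ℕ} (h : j ≤ k) : wterm i j k = 0 := by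
  simp [wterm, Nat.sub_eq_zero_of_le h]

lemma hterm_comm (i j k : ℕ) : hterm i j k = hterm j i k := by unfold hterm; ring

lemma uterm_wterm (i j k : ℕ) : uterm i j k = wterm j i k := by unfold uterm wterm; ring

lemma hterm_zero_left (i j : ℕ) : hterm (i + 1) j 0 = hterm i j 0 + uterm i j 0 := by
  simp only [hterm, uterm, Nat.choose_zero_right, Nat.factorial_zero, Nat.sub_zero]
  rw [invc_rec i]
  ring

lemma hterm_succ_left (i j k : ℕ) :
    hterm (i + 1) j (k + 1) =
      (hterm i j (k + 1) + uterm i j (k + 1)) + wterm i j k := by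
  have hP : (i + 1).choose (k + 1) = i.choose (k + 1) + i.choose k :=
    (Nat.choose_succ_succ' i k).trans (Nat.add_comm _ _)
  have key : ∀ m : ℕ, i.choose m * j.choose m * m.factorial *
      invc (i + 1 - m) * invc (j - m) = hterm i j m + uterm i j m := by
    intro m
    rw [hterm, uterm, invc_rec' i m]
    ring
  have hY : i.choose k * j.choose (k + 1) * (k + 1).factorial * invc (i - k) * invc (j - k - 1) =
      (j - k) * (i.choose k * j.choose k * k.factorial * invc (i - k) * invc (j - k - 1)) := by
    rw [Nat.factorial_succ]
    calc i.choose k * j.choose (k + 1) * ((k + 1) * k.factorial) * invc (i - k) * invc (j - k - 1)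
        = i.choose k * (j.choose (k + 1) * (k + 1)) * k.factorial * invc (i - k) *
            invc (j - k - 1) := by ring
      _ = i.choose k * (j.choose k * (j - k)) * k.factorial * invc (i - k) *
            invc (j - k - 1) := by rw [Nat.choose_succ_right_eq]
      _ = _ := by ring
  have h1 : hterm (i + 1) j (k + 1) =
      i.choose (k + 1) * j.choose (k + 1) * (k + 1).factorial * invc (i + 1 - (k + 1)) *
        invc (j - (k + 1)) +
      i.choose k * j.choose (k + 1) * (k + 1).factorial * invc (i - k) * invc (j - k - 1) := by
    rw [hterm, hP, show i + 1 - (k + 1) = i - k by omega, show j - (k + 1) = j - k - 1 by omega]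
    ring
  rw [h1, show wterm i j k =
      (j - k) * (i.choose k * j.choose k * k.factorial * invc (i - k) * invc (j - k - 1))
    from rfl, hY, key (k + 1)]

open Finset in
lemma sum_hterm_succ_left (i j M : ℕ) (hM : j ≤ M) :
    ∑ k ∈ range (M + 1), hterm (i + 1) j k =
      ∑ k ∈ range (M + 1), hterm i j k + ∑ k ∈ range (M + 1), uterm i j k +
        ∑ k ∈ range (M + 1), wterm i j k := by
  rw [Finset.sum_range_succ' (fun k => hterm (i + 1) j k) M,
    Finset.sum_range_succ' (fun k => hterm i j k) M,
    Finset.sum_range_succ' (fun k => uterm i j k) M,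
    Finset.sum_range_succ (fun k => wterm i j k) M, wterm_eq_zero hM, add_zero]
  have : ∑ l ∈ range M, hterm (i + 1) j (l + 1) =
      ∑ l ∈ range M, (hterm i j (l + 1) + uterm i j (l + 1) + wterm i j l) :=
    Finset.sum_congr rfl fun l _ => hterm_succ_left i j l
  rw [this, Finset.sum_add_distrib, Finset.sum_add_distrib, hterm_zero_left]
  ring

open Finset in
lemma sum_hterm_swap (i j : ℕ) :
    ∑ k ∈ range (i + j + 2), hterm (i + 1) j k =
      ∑ k ∈ range (i + j + 2), hterm i (j + 1) k := by
  have h1 := sum_hterm_succ_left i j (i + j + 1) (by omega)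
  have h2 := sum_hterm_succ_left j i (i + j + 1) (by omega)
  have e1 : ∑ k ∈ range (i + j + 1 + 1), hterm i (j + 1) k =
      ∑ k ∈ range (i + j + 1 + 1), hterm (j + 1) i k :=
    Finset.sum_congr rfl fun k _ => hterm_comm _ _ _
  rw [show i + j + 2 = i + j + 1 + 1 from rfl, h1, e1, h2]
  rw [Finset.sum_congr rfl fun k (_ : k ∈ range (i + j + 1 + 1)) => hterm_comm j i k,
    Finset.sum_congr rfl fun k (_ : k ∈ range (i + j + 1 + 1)) => uterm_wterm j i k,
    Finset.sum_congr rfl fun k (_ : k ∈ range (i + j + 1 + 1)) =>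
      (uterm_wterm i j k).symm]
  ring

open Finset in
lemma invc_add_eq_sum (i j : ℕ) :
    invc (i + j) = ∑ k ∈ range (i + j + 1), hterm i j k := by
  induction i generalizing j with
  | zero =>
    rw [Finset.sum_eq_single_of_mem 0 (by simp) fun k _ hk => by
      simp [hterm, Nat.choose_eq_zero_of_lt (Nat.pos_of_ne_zero hk)]]
    simp [hterm, invc_zero]
  | succ i ih =>
    have : i + 1 + j = i + (j + 1) := by omega
    rw [show i + 1 + j + 1 = i + j + 2 by omega, sum_hterm_swap i j,
      show i + j + 2 = i + (j + 1) + 1 by omega, ← ih (j + 1), this]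

open Finset in
lemma invc_add_eq_sum' (i j N : ℕ) (hi : i < N) :
    invc (i + j) = ∑ k ∈ range N, hterm i j k := by
  rw [invc_add_eq_sum i j]
  rcases le_or_gt N (i + j + 1) with h | h
  · exact (Finset.sum_subset (Finset.range_subset_range.2 h) fun k _ hk =>
      hterm_eq_zero (by simp only [Finset.mem_range] at hk ⊢; omega)).symm
  · exact Finset.sum_subset (Finset.range_subset_range.2 h.le) fun k hk hk' =>
      hterm_eq_zero (by simp only [Finset.mem_range, not_lt] at hk hk' ⊢; omega)

/-- The Hankel transform of the restricted Bell numbers `B_{n,≤2}` is the superfactorials. -/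
theorem hankel_det_restrictedBell_two (n : ℕ) :
    Matrix.det (Matrix.of fun i j : Fin (n + 1) =>
        (restrictedBell ((i : ℕ) + (j : ℕ)) 2 : ℤ)) =
      ∏ i ∈ Finset.range (n + 1), (i.factorial : ℤ) := by
  classical
  set L : Matrix (Fin (n + 1)) (Fin (n + 1)) ℤ :=
    Matrix.of fun i k : Fin (n + 1) =>
      (((i : ℕ).choose k * invc ((i : ℕ) - (k : ℕ)) : ℕ) : ℤ) with hL
  set d : Fin (n + 1) → ℤ := fun k => ((k : ℕ).factorial : ℤ) with hd
  have hdecomp : (Matrix.of fun i j : Fin (n + 1) =>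
      (restrictedBell ((i : ℕ) + (j : ℕ)) 2 : ℤ)) = L * Matrix.diagonal d * L.transpose := by
    ext i j
    rw [Matrix.mul_apply]
    have : ∀ k : Fin (n + 1), (L * Matrix.diagonal d) i k * L.transpose k j =
        ((hterm (i : ℕ) (j : ℕ) (k : ℕ) : ℕ) : ℤ) := by
      intro k
      rw [Matrix.mul_diagonal]
      show (((i : ℕ).choose k * invc ((i : ℕ) - (k : ℕ)) : ℕ) : ℤ) * d k *
          (((j : ℕ).choose k * invc ((j : ℕ) - (k : ℕ)) : ℕ) : ℤ) = _
      rw [hd, hterm]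
      push_cast
      ring
    rw [Finset.sum_congr rfl fun k _ => this k]
    show (restrictedBell ((i : ℕ) + (j : ℕ)) 2 : ℤ) = _
    rw [restrictedBell_two_eq_ic, ← invc]
    rw [invc_add_eq_sum' (i : ℕ) (j : ℕ) (n + 1) i.isLt]
    push_cast
    rw [← Fin.sum_univ_eq_sum_range (fun k => ((hterm (i : ℕ) (j : ℕ) k : ℕ) : ℤ)) (n + 1)]
  rw [hdecomp, Matrix.det_mul, Matrix.det_mul, Matrix.det_transpose]
  have hLtri : L.BlockTriangular OrderDual.toDual := by
    intro i j hij
    have : (i : ℕ) < (j : ℕ) := hij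
    simp [hL, Nat.choose_eq_zero_of_lt this]
  have hLdet : L.det = 1 := by
    rw [Matrix.det_of_lowerTriangular L hLtri]
    have : ∀ i : Fin (n + 1), L i i = 1 := by
      intro i
      simp [hL, invc_zero]
    rw [Finset.prod_congr rfl fun i _ => this i]
    simp
  rw [hLdet, Matrix.det_diagonal, one_mul, mul_one]
  rw [← Fin.prod_univ_eq_prod_range (fun k => ((k.factorial : ℕ) : ℤ)) (n + 1)]
end

section
/- For every natural number n and every integer m ≥ 2, the restricted Bell numbers satisfy B_{n,≤m} = ∑_{i=0}^{⌊n/m⌋} n! / ( i! · (m!)^i · (n-im)! ) · B_{n-im,≤m-1}. -/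
open Finset

section transport

variable {α β : Type*} [DecidableEq α] [DecidableEq β] [Fintype β]
variable (g : β ↪ α) {t : Finset α}

private lemma map_preimage_of_subset (ht : Finset.univ.map g = t) {b : Finset α} (hb : b ⊆ t) :
    (b.preimage g g.injective.injOn).map g = b := by
  ext x
  simp only [mem_map, mem_preimage]
  constructor
  · rintro ⟨y, hy, rfl⟩; exact hy
  · intro hx
    have : x ∈ Finset.univ.map g := ht ▸ hb hx
    obtain ⟨y, -, rfl⟩ := mem_map.1 this
    exact ⟨y, hx, rfl⟩

/-- Push a finpartition of `univ : Finset β` forward along an embedding with range `t`. -/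
def partFwd (ht : Finset.univ.map g = t) (Q : Finpartition (univ : Finset β)) :
    Finpartition t where
  parts := Q.parts.image (fun b => b.map g)
  supIndep := by
    rw [Finset.supIndep_iff_pairwiseDisjoint]
    intro x hx y hy hxy
    simp only [coe_image, Set.mem_image, mem_coe] at hx hy
    obtain ⟨b, hb, rfl⟩ := hx
    obtain ⟨c, hc, rfl⟩ := hy
    have hbc : b ≠ c := fun h => hxy (by rw [h])
    have := Q.supIndep.pairwiseDisjoint hb hc hbc
    simpa [Function.onFun] using (Finset.disjoint_map g).2 this
  sup_parts := by
    subst ht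
    ext x
    simp only [mem_sup, mem_image, id_eq]
    constructor
    · rintro ⟨_, ⟨b, hb, rfl⟩, hx⟩
      obtain ⟨y, hy, rfl⟩ := mem_map.1 hx
      exact mem_map_of_mem g (mem_univ y)
    · intro hx
      obtain ⟨y, -, rfl⟩ := mem_map.1 hx
      have : y ∈ Q.parts.sup id := by rw [Q.sup_parts]; exact mem_univ y
      obtain ⟨b, hb, hyb⟩ := mem_sup.1 this
      exact ⟨b.map g, ⟨b, hb, rfl⟩, mem_map_of_mem g hyb⟩
  bot_notMem := by
    simp only [bot_eq_empty, mem_image]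
    rintro ⟨b, hb, hbe⟩
    rw [Finset.map_eq_empty] at hbe
    subst hbe
    exact Q.bot_notMem hb

/-- Pull a finpartition of `t` back along an embedding with range `t`. -/
noncomputable def partBwd (ht : Finset.univ.map g = t) (Q : Finpartition t) :
    Finpartition (univ : Finset β) where
  parts := Q.parts.image (fun b => b.preimage g g.injective.injOn)
  supIndep := by
    rw [Finset.supIndep_iff_pairwiseDisjoint]
    intro x hx y hy hxy
    simp only [coe_image, Set.mem_image, mem_coe] at hx hy
    obtain ⟨b, hb, rfl⟩ := hx
    obtain ⟨c, hc, rfl⟩ := hy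
    have hbc : b ≠ c := fun h => hxy (by rw [h])
    have hd := Q.supIndep.pairwiseDisjoint hb hc hbc
    simp only [Function.onFun, id_eq] at hd ⊢
    rw [Finset.disjoint_left] at hd ⊢
    intro a ha ha'
    exact hd (mem_preimage.1 ha) (mem_preimage.1 ha')
  sup_parts := by
    ext y
    simp only [mem_sup, mem_image, mem_univ, iff_true]
    have : g y ∈ t := ht ▸ mem_map_of_mem g (mem_univ y)
    rw [← Q.sup_parts] at this
    obtain ⟨b, hb, hyb⟩ := mem_sup.1 this
    exact ⟨_, ⟨b, hb, rfl⟩, mem_preimage.2 hyb⟩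
  bot_notMem := by
    simp only [bot_eq_empty, mem_image]
    rintro ⟨b, hb, hbe⟩
    have hbt : b ⊆ t := Q.le hb
    have hbne := Q.nonempty_of_mem_parts hb
    obtain ⟨x, hx⟩ := hbne
    have : x ∈ Finset.univ.map g := ht ▸ hbt hx
    obtain ⟨y, -, rfl⟩ := mem_map.1 this
    have : y ∈ b.preimage g g.injective.injOn := mem_preimage.2 hx
    rw [hbe] at this
    exact absurd this (notMem_empty y)

lemma transport_card (ht : Finset.univ.map g = t) (c : ℕ) :
    Nat.card {Q : Finpartition t // ∀ b ∈ Q.parts, b.card ≤ c} =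
      Nat.card {Q : Finpartition (univ : Finset β) // ∀ b ∈ Q.parts, b.card ≤ c} := by
  apply Nat.card_congr
  refine ⟨fun Q => ⟨partBwd g ht Q.1, ?_⟩, fun Q => ⟨partFwd g ht Q.1, ?_⟩, ?_, ?_⟩
  · rintro b hb
    obtain ⟨b', hb', rfl⟩ := mem_image.1 hb
    have : (b'.preimage g g.injective.injOn).map g = b' :=
      map_preimage_of_subset g ht (Q.1.le hb')
    calc (b'.preimage g g.injective.injOn).card
        = ((b'.preimage g g.injective.injOn).map g).card := (card_map g).symm
      _ = b'.card := by rw [this]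
      _ ≤ c := Q.2 b' hb'
  · rintro b hb
    obtain ⟨b', hb', rfl⟩ := mem_image.1 hb
    rw [card_map]
    exact Q.2 b' hb'
  · rintro ⟨Q, hQ⟩
    apply Subtype.ext
    apply Finpartition.ext
    show (Q.parts.image _).image _ = Q.parts
    rw [Finset.image_image]
    have : ∀ b ∈ Q.parts, (b.preimage g g.injective.injOn).map g = b := by
      intro b hb
      exact map_preimage_of_subset g ht (Q.le hb)
    calc Q.parts.image _ = Q.parts.image id := Finset.image_congr (fun b hb => this b hb)
      _ = Q.parts := Finset.image_id
  · rintro ⟨Q, hQ⟩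
    apply Subtype.ext
    apply Finpartition.ext
    show (Q.parts.image _).image _ = Q.parts
    rw [Finset.image_image]
    have : ∀ b ∈ Q.parts, (b.map g).preimage g g.injective.injOn = b := by
      intro b hb
      ext y
      simp only [mem_preimage, mem_map]
      constructor
      · rintro ⟨z, hz, hzy⟩
        rwa [g.injective hzy] at hz
      · intro hy; exact ⟨y, hy, rfl⟩
    calc Q.parts.image _ = Q.parts.image id := Finset.image_congr (fun b hb => this b hb)
      _ = Q.parts := Finset.image_id

end transport

lemma card_partitions_finset {n : ℕ} (t : Finset (Fin n)) (c : ℕ) :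
    Nat.card {Q : Finpartition t // ∀ b ∈ Q.parts, b.card ≤ c} = restrictedBell t.card c := by
  classical
  let g : Fin t.card ↪ Fin n :=
    (t.equivFin.symm.toEmbedding).trans (Function.Embedding.subtype _)
  have ht : Finset.univ.map g = t := by
    ext x
    simp only [mem_map, mem_univ, true_and]
    constructor
    · rintro ⟨y, rfl⟩
      exact (t.equivFin.symm y).2
    · intro hx
      exact ⟨t.equivFin ⟨x, hx⟩, by simp [g]⟩
  rw [transport_card g ht c, restrictedBell]

section decomp
variable {α : Type*} [DecidableEq α]

lemma sup_parts_sdiff {s : Finset α} (P : Finpartition s) {E : Finset (Finset α)}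
    (hE : E ⊆ P.parts) : (P.parts \ E).sup id = s \ E.sup id := by
  ext x
  simp only [mem_sup, mem_sdiff, id_eq]
  constructor
  · rintro ⟨b, hb, hxb⟩
    have hb1 : b ∈ P.parts := hb.1
    have hb2 : b ∉ E := hb.2
    refine ⟨P.le hb1 hxb, fun hx => ?_⟩
    obtain ⟨c, hc, hxc⟩ := hx
    exact hb2 (by rwa [P.eq_of_mem_parts hb1 (hE hc) hxb hxc])
  · rintro ⟨hxs, hx⟩
    obtain ⟨b, ⟨hb, hxb⟩, -⟩ := P.existsUnique_mem hxs
    exact ⟨b, ⟨hb, fun hbE => hx ⟨b, hbE, hxb⟩⟩, hxb⟩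

/-- Union of two finpartitions of disjoint ground sets. -/
def unionPart {a b : Finset α} (hab : Disjoint a b) (P : Finpartition a) (Q : Finpartition b) :
    Finpartition (a ∪ b) where
  parts := P.parts ∪ Q.parts
  supIndep := by
    rw [Finset.supIndep_iff_pairwiseDisjoint]
    intro x hx y hy hxy
    simp only [coe_union, Set.mem_union, mem_coe] at hx hy
    have key : ∀ u v : Finset α, u ∈ P.parts → v ∈ Q.parts → Disjoint u v := by
      intro u v hu hv
      exact disjoint_of_subset_left (P.le hu) (disjoint_of_subset_right (Q.le hv) hab)
    rcases hx with hx | hx <;> rcases hy with hy | hy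
    · exact P.supIndep.pairwiseDisjoint hx hy hxy
    · exact key _ _ hx hy
    · exact (key _ _ hy hx).symm
    · exact Q.supIndep.pairwiseDisjoint hx hy hxy
  sup_parts := by rw [sup_union, P.sup_parts, Q.sup_parts, sup_eq_union]
  bot_notMem := by
    simp only [mem_union]
    rintro (h | h)
    · exact P.bot_notMem h
    · exact Q.bot_notMem h

/-- The finpartition of `D.sup id` whose parts are the members of a disjoint family `D`. -/
def famPartition (D : Finset (Finset α))
    (hdisj : ∀ b ∈ D, ∀ c ∈ D, b ≠ c → Disjoint b c) (hne : ∅ ∉ D) :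
    Finpartition (D.sup id) where
  parts := D
  supIndep := by
    rw [Finset.supIndep_iff_pairwiseDisjoint]
    intro x hx y hy hxy
    exact hdisj x hx y hy hxy
  sup_parts := rfl
  bot_notMem := hne

end decomp

/-- Families of pairwise disjoint `m`-subsets of `Fin n`. -/
def famSet (n m : ℕ) : Finset (Finset (Finset (Fin n))) :=
  univ.filter (fun D => (∀ b ∈ D, b.card = m) ∧ ∀ b ∈ D, ∀ c ∈ D, b ≠ c → Disjoint b c)

lemma famSet_sup_card {n m : ℕ} {D : Finset (Finset (Fin n))} (hD : D ∈ famSet n m) :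
    (D.sup id).card = D.card * m := by
  rw [famSet, mem_filter] at hD
  rw [Finset.sup_eq_biUnion, Finset.card_biUnion (t := id) (fun x hx y hy hxy => hD.2.2 x hx y hy hxy)]
  simp only [id_eq]
  rw [Finset.sum_congr rfl (fun b hb => hD.2.1 b hb), Finset.sum_const, smul_eq_mul]

lemma fiber_card (n m : ℕ) (hm : 2 ≤ m) {D : Finset (Finset (Fin n))} (hD : D ∈ famSet n m) :
    ((univ.filter (fun P : Finpartition (univ : Finset (Fin n)) => ∀ b ∈ P.parts, b.card ≤ m)).filter
        (fun P => P.parts.filter (fun b => b.card = m) = D)).card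
      = Fintype.card {Q : Finpartition ((univ : Finset (Fin n)) \ D.sup id) // ∀ b ∈ Q.parts, b.card ≤ m - 1} := by
  classical
  have hDf := hD
  rw [famSet, mem_filter] at hDf
  obtain ⟨-, hcards, hdisj⟩ := hDf
  have hne : ∅ ∉ D := fun h => by
    have := hcards ∅ h
    simp only [card_empty] at this
    omega
  rw [Fintype.card_subtype]
  refine Finset.card_bij'
    (i := fun P hP => Finpartition.ofSubset P (sdiff_subset : P.parts \ D ⊆ P.parts)
      (by
        have hΦ : P.parts.filter (fun b => b.card = m) = D := (mem_filter.1 hP).2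
        have hsub : D ⊆ P.parts := hΦ ▸ filter_subset _ _
        rw [sup_parts_sdiff P hsub]))
    (j := fun Q hQ => (unionPart (Finset.disjoint_sdiff) (famPartition D hdisj hne) Q).copy
      (by rw [Finset.union_sdiff_of_subset (subset_univ _)]))
    ?_ ?_ ?_ ?_
  · -- hi
    intro P hP
    have hP1 := (mem_filter.1 (mem_filter.1 hP).1).2
    have hΦ : P.parts.filter (fun b => b.card = m) = D := (mem_filter.1 hP).2
    rw [mem_filter]
    refine ⟨mem_univ _, fun b hb => ?_⟩
    have hb' : b ∈ P.parts \ D := hb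
    have hbp : b ∈ P.parts := (mem_sdiff.1 hb').1
    have hbD : b ∉ D := (mem_sdiff.1 hb').2
    have h1 : b.card ≤ m := hP1 b hbp
    have h2 : b.card ≠ m := fun h => hbD (hΦ ▸ mem_filter.2 ⟨hbp, h⟩)
    omega
  · -- hj
    intro Q hQ
    have hQ1 := (mem_filter.1 hQ).2
    rw [mem_filter, mem_filter]
    have hparts : ((unionPart (Finset.disjoint_sdiff) (famPartition D hdisj hne) Q).copy
        (by rw [Finset.union_sdiff_of_subset (subset_univ _)])).parts = D ∪ Q.parts := rfl
    refine ⟨⟨mem_univ _, ?_⟩, ?_⟩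
    · intro b hb
      rw [hparts, mem_union] at hb
      rcases hb with hb | hb
      · exact le_of_eq (hcards b hb)
      · have := hQ1 b hb; omega
    · rw [hparts, filter_union]
      have e1 : D.filter (fun b => b.card = m) = D := filter_true_of_mem (fun b hb => hcards b hb)
      have e2 : Q.parts.filter (fun b => b.card = m) = ∅ := by
        rw [filter_eq_empty_iff]
        intro b hb
        have := hQ1 b hb
        omega
      rw [e1, e2, union_empty]
  · -- left inverse
    intro P hP
    have hΦ : P.parts.filter (fun b => b.card = m) = D := (mem_filter.1 hP).2
    have hsub : D ⊆ P.parts := hΦ ▸ filter_subset _ _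
    apply Finpartition.ext
    show D ∪ (P.parts \ D) = P.parts
    exact Finset.union_sdiff_of_subset hsub
  · -- right inverse
    intro Q hQ
    have hQ1 := (mem_filter.1 hQ).2
    apply Finpartition.ext
    show (D ∪ Q.parts) \ D = Q.parts
    apply Finset.union_sdiff_cancel_left
    rw [disjoint_left]
    intro b hbD hbQ
    have := hcards b hbD
    have := hQ1 b hbQ
    omega

lemma rb_eq_sum (n m : ℕ) (hm : 2 ≤ m) :
    restrictedBell n m = ∑ D ∈ famSet n m, restrictedBell (n - D.card * m) (m - 1) := by
  classical
  rw [restrictedBell, Nat.card_eq_fintype_card, Fintype.card_subtype]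
  rw [Finset.card_eq_sum_card_fiberwise (f := fun P => P.parts.filter (fun b => b.card = m))
      (t := famSet n m)
      (fun P hP => by
        rw [famSet, mem_coe, mem_filter]
        refine ⟨mem_univ _, fun b hb => (mem_filter.1 hb).2, fun b hb c hc hbc => ?_⟩
        exact P.supIndep.pairwiseDisjoint (mem_coe.2 (filter_subset _ _ hb))
          (mem_coe.2 (filter_subset _ _ hc)) hbc)]
  refine Finset.sum_congr rfl (fun D hD => ?_)
  rw [fiber_card n m hm hD, ← Nat.card_eq_fintype_card, card_partitions_finset]
  congr 1
  rw [card_sdiff_of_subset (subset_univ _), card_univ, Fintype.card_fin, famSet_sup_card hD]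
section perm

variable (n m i : ℕ)

/-- ordered families of `i` pairwise disjoint `m`-subsets of `Fin n` -/
def ordFam : Finset (Fin i → Finset (Fin n)) :=
  univ.filter (fun f => (∀ j, (f j).card = m) ∧ ∀ j k, j ≠ k → Disjoint (f j) (f k))

/-- blocks of a bijection -/
def blocks (e : (Fin i × Fin m) ⊕ Fin (n - i * m) ≃ Fin n) : Fin i → Finset (Fin n) :=
  fun j => univ.image (fun t : Fin m => e (Sum.inl (j, t)))

variable {n m i}

lemma blocks_mem (e : (Fin i × Fin m) ⊕ Fin (n - i * m) ≃ Fin n) :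
    blocks n m i e ∈ ordFam n m i := by
  rw [ordFam, mem_filter]
  refine ⟨mem_univ _, fun j => ?_, fun j k hjk => ?_⟩
  · rw [blocks, Finset.card_image_of_injective _
      (fun t₁ t₂ h => by
        have := e.injective h
        simpa using this), card_univ, Fintype.card_fin]
  · rw [disjoint_left]
    rintro x hx hx'
    obtain ⟨t, -, rfl⟩ := mem_image.1 hx
    obtain ⟨t', -, ht'⟩ := mem_image.1 hx'
    have := e.injective ht'.symm
    simp only [Sum.inl.injEq, Prod.mk.injEq] at this
    exact hjk this.1

lemma fiber1_card (him : i * m ≤ n) {f : Fin i → Finset (Fin n)}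
    (hf : f ∈ ordFam n m i) :
    ((univ : Finset ((Fin i × Fin m) ⊕ Fin (n - i * m) ≃ Fin n)).filter
        (fun e => blocks n m i e = f)).card
      = m.factorial ^ i * (n - i * m).factorial := by
  classical
  rw [ordFam, mem_filter] at hf
  obtain ⟨-, hcard, hdisj⟩ := hf
  set r := n - i * m with hr
  set tf : Finset (Fin n) := univ \ univ.biUnion f with htf
  have hsub : ∀ j, f j ⊆ univ.biUnion f := fun j => subset_biUnion_of_mem f (mem_univ j)
  have hbu : (univ.biUnion f).card = i * m := by
    rw [card_biUnion (fun x _ y _ h => hdisj x y h)]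
    simp only [hcard, sum_const, card_univ, Fintype.card_fin, smul_eq_mul]
  have htfcard : tf.card = r := by
    rw [htf, card_sdiff_of_subset (subset_univ _), card_univ, Fintype.card_fin, hbu]
  -- the underlying function of the glued bijection
  let w : (((j : Fin i) → (Fin m ≃ {x // x ∈ f j})) × (Fin r ≃ {x // x ∈ tf})) →
      ((Fin i × Fin m) ⊕ Fin r → Fin n) :=
    fun gh d => Sum.rec (fun p => (gh.1 p.1 p.2 : Fin n)) (fun u => (gh.2 u : Fin n)) d
  have hw : ∀ gh, Function.Bijective (w gh) := by
    intro gh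
    rw [Fintype.bijective_iff_injective_and_card]
    constructor
    · rintro (⟨j, t⟩ | u) (⟨k, t'⟩ | u') h
      · simp only [w] at h
        by_cases hjk : j = k
        · subst hjk
          have ht : t = t' := (gh.1 j).injective (Subtype.coe_injective h)
          rw [ht]
        · exfalso
          have h1 : ((gh.1 j t : Fin n)) ∈ f j := (gh.1 j t).2
          have h2 : ((gh.1 k t' : Fin n)) ∈ f k := (gh.1 k t').2
          rw [← h] at h2
          exact (disjoint_left.1 (hdisj j k hjk)) h1 h2
      · exfalso
        simp only [w] at h
        have h1 : ((gh.1 j t : Fin n)) ∈ univ.biUnion f := hsub j (gh.1 j t).2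
        have h2 : (gh.2 u' : Fin n) ∉ univ.biUnion f := (mem_sdiff.1 (gh.2 u').2).2
        exact h2 (h ▸ h1)
      · exfalso
        simp only [w] at h
        have h1 : ((gh.1 k t' : Fin n)) ∈ univ.biUnion f := hsub k (gh.1 k t').2
        have h2 : (gh.2 u : Fin n) ∉ univ.biUnion f := (mem_sdiff.1 (gh.2 u).2).2
        exact h2 (h.symm ▸ h1)
      · simp only [w] at h
        rw [(gh.2).injective (Subtype.coe_injective h)]
    · simp only [Fintype.card_sum, Fintype.card_prod, Fintype.card_fin]
      omega
  let glue : (((j : Fin i) → (Fin m ≃ {x // x ∈ f j})) × (Fin r ≃ {x // x ∈ tf})) →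
      {e : (Fin i × Fin m) ⊕ Fin r ≃ Fin n // blocks n m i e = f} :=
    fun gh => ⟨Equiv.ofBijective (w gh) (hw gh), by
      funext j
      ext x
      simp only [blocks, mem_image, Equiv.ofBijective_apply]
      constructor
      · rintro ⟨t, -, rfl⟩
        exact (gh.1 j t).2
      · intro hx
        refine ⟨(gh.1 j).symm ⟨x, hx⟩, mem_univ _, ?_⟩
        show ((gh.1 j ((gh.1 j).symm ⟨x, hx⟩) : {x // x ∈ f j}) : Fin n) = x
        rw [Equiv.apply_symm_apply]⟩
  have hglue : Function.Bijective glue := by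
    constructor
    · rintro ⟨g, h⟩ ⟨g', h'⟩ hgh
      have hww : ∀ d, w ⟨g, h⟩ d = w ⟨g', h'⟩ d := fun d =>
        DFunLike.congr_fun (congrArg Subtype.val hgh) d
      refine Prod.ext ?_ ?_
      · funext j
        apply Equiv.ext
        intro t
        exact Subtype.coe_injective (hww (Sum.inl (j, t)))
      · apply Equiv.ext
        intro u
        exact Subtype.coe_injective (hww (Sum.inr u))
    · rintro ⟨e, he⟩
      have hmemf : ∀ j (t : Fin m), e (Sum.inl (j, t)) ∈ f j := by
        intro j t
        rw [← congrFun he j]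
        exact mem_image_of_mem _ (mem_univ t)
      have hmemtf : ∀ u : Fin r, e (Sum.inr u) ∈ tf := by
        intro u
        rw [htf, mem_sdiff]
        refine ⟨mem_univ _, fun hmem => ?_⟩
        obtain ⟨j, -, hj⟩ := mem_biUnion.1 hmem
        rw [← congrFun he j] at hj
        obtain ⟨t, -, ht⟩ := mem_image.1 hj
        have := e.injective ht
        simp at this
      refine ⟨⟨fun j => Equiv.ofBijective
          (fun t => (⟨e (Sum.inl (j, t)), hmemf j t⟩ : {x // x ∈ f j})) ?_,
        Equiv.ofBijective (fun u => (⟨e (Sum.inr u), hmemtf u⟩ : {x // x ∈ tf})) ?_⟩, ?_⟩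
      · rw [Fintype.bijective_iff_injective_and_card]
        constructor
        · intro t t' htt
          have := e.injective (congrArg Subtype.val htt)
          simpa using this
        · simp [Fintype.card_coe, hcard j]
      · rw [Fintype.bijective_iff_injective_and_card]
        constructor
        · intro u u' huu
          have := e.injective (congrArg Subtype.val huu)
          simpa using this
        · simp [Fintype.card_coe, htfcard]
      · apply Subtype.ext
        apply Equiv.ext
        rintro (⟨j, t⟩ | u) <;> rfl
  have key : ((univ : Finset ((Fin i × Fin m) ⊕ Fin r ≃ Fin n)).filter
      (fun e => blocks n m i e = f)).card
      = Fintype.card ((((j : Fin i) → (Fin m ≃ {x // x ∈ f j})) × (Fin r ≃ {x // x ∈ tf}))) := by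
    rw [← Fintype.card_subtype, Fintype.card_congr (Equiv.ofBijective glue hglue).symm]
  rw [key, Fintype.card_prod, Fintype.card_pi]
  congr 1
  · calc ∏ j : Fin i, Fintype.card (Fin m ≃ {x // x ∈ f j})
        = ∏ j : Fin i, m.factorial := by
          refine Finset.prod_congr rfl (fun j _ => ?_)
          rw [Fintype.card_equiv (Fintype.equivOfCardEq (by simp [Fintype.card_coe, hcard j]))]
          simp
      _ = m.factorial ^ i := by rw [prod_const, card_univ, Fintype.card_fin]
  · rw [Fintype.card_equiv (Fintype.equivOfCardEq (by simp [Fintype.card_coe, htfcard]))]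
    simp [hr]

lemma fiber2_card (hm : 2 ≤ m) {D : Finset (Finset (Fin n))}
    (hD : D ∈ (famSet n m).filter (fun D => D.card = i)) :
    ((ordFam n m i).filter (fun f => univ.image f = D)).card = i.factorial := by
  classical
  rw [mem_filter] at hD
  obtain ⟨hDfam, hDcard⟩ := hD
  rw [famSet, mem_filter] at hDfam
  obtain ⟨-, hcards, hdisj⟩ := hDfam
  have htarget : ((univ : Finset (Fin i ≃ {b // b ∈ D}))).card = i.factorial := by
    rw [card_univ, Fintype.card_equiv (Fintype.equivOfCardEq (by simp [Fintype.card_coe, hDcard]))]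
    simp
  rw [← htarget]
  refine Finset.card_bij'
    (i := fun f hf => Equiv.ofBijective
      (fun j => (⟨f j, by
        have him : univ.image f = D := (mem_filter.1 hf).2
        rw [← him]
        exact mem_image_of_mem f (mem_univ j)⟩ : {b // b ∈ D}))
      (by
        have hf' := mem_filter.1 hf
        have hc : ∀ j, (f j).card = m := ((mem_filter.1 hf'.1).2).1
        have hd : ∀ j k, j ≠ k → Disjoint (f j) (f k) := ((mem_filter.1 hf'.1).2).2
        rw [Fintype.bijective_iff_injective_and_card]
        constructor
        · intro j k h
          have hjk : f j = f k := congrArg Subtype.val h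
          by_contra hne
          have hd' := hd j k hne
          have hk : (f k).Nonempty :=
            card_pos.1 (lt_of_lt_of_eq (by omega : 0 < m) (hc k).symm)
          obtain ⟨x, hx⟩ := hk
          exact disjoint_left.1 hd' (hjk ▸ hx) hx
        · simp [Fintype.card_coe, hDcard]))
    (j := fun q _ => fun j => (q j : Finset (Fin n)))
    ?_ ?_ ?_ ?_
  · -- hi
    intro f hf
    exact mem_univ _
  · -- hj
    intro q hq
    rw [mem_filter, ordFam, mem_filter]
    have hqinj : ∀ j k, j ≠ k → (q j : Finset (Fin n)) ≠ q k := by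
      intro j k hjk h
      exact hjk (q.injective (Subtype.coe_injective h))
    refine ⟨⟨mem_univ _, fun j => hcards _ (q j).2,
      fun j k hjk => hdisj _ (q j).2 _ (q k).2 (hqinj j k hjk)⟩, ?_⟩
    ext b
    simp only [mem_image, mem_univ, true_and]
    constructor
    · rintro ⟨j, rfl⟩
      exact (q j).2
    · intro hb
      exact ⟨q.symm ⟨b, hb⟩, by simp⟩

  · -- left inverse
    intro f hf
    funext j
    rfl
  · -- right inverse
    intro q hq
    apply Equiv.ext
    intro j
    apply Subtype.ext
    rfl
lemma fam_count (hm : 2 ≤ m) (him : i * m ≤ n) :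
    ((famSet n m).filter (fun D => D.card = i)).card *
      (i.factorial * (m.factorial ^ i * (n - i * m).factorial)) = n.factorial := by
  classical
  have h1 : (univ : Finset ((Fin i × Fin m) ⊕ Fin (n - i * m) ≃ Fin n)).card = n.factorial := by
    rw [card_univ, Fintype.card_equiv (Fintype.equivOfCardEq (by
      simp only [Fintype.card_sum, Fintype.card_prod, Fintype.card_fin]
      omega))]
    simp only [Fintype.card_sum, Fintype.card_prod, Fintype.card_fin]
    congr 1
    omega
  have h2 : (univ : Finset ((Fin i × Fin m) ⊕ Fin (n - i * m) ≃ Fin n)).card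
      = (ordFam n m i).card * (m.factorial ^ i * (n - i * m).factorial) := by
    rw [Finset.card_eq_sum_card_fiberwise (f := blocks n m i) (t := ordFam n m i)
      (fun e _ => blocks_mem e)]
    rw [Finset.sum_congr rfl (fun f hf => fiber1_card him hf), sum_const, smul_eq_mul]
  have h3 : (ordFam n m i).card = ((famSet n m).filter (fun D => D.card = i)).card * i.factorial := by
    rw [Finset.card_eq_sum_card_fiberwise (f := fun f => univ.image f)
      (t := (famSet n m).filter (fun D => D.card = i)) ?maps]
    case maps =>
      intro f hf
      rw [ordFam, mem_coe, mem_filter] at hf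
      obtain ⟨-, hc, hd⟩ := hf
      have hfinj : Function.Injective f := by
        intro j k hjk
        by_contra hne
        have hd' := hd j k hne
        have hk : (f k).Nonempty := by
          rw [← card_pos, hc k]; omega
        obtain ⟨x, hx⟩ := hk
        exact disjoint_left.1 hd' (hjk ▸ hx) hx
      rw [mem_coe, mem_filter, famSet, mem_filter]
      refine ⟨⟨mem_univ _, ?_, ?_⟩, ?_⟩
      · rintro b hb
        obtain ⟨j, -, rfl⟩ := mem_image.1 hb
        exact hc j
      · rintro b hb c hc' hbc
        obtain ⟨j, -, rfl⟩ := mem_image.1 hb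
        obtain ⟨k, -, rfl⟩ := mem_image.1 hc'
        exact hd j k (fun h => hbc (by rw [h]))
      · rw [card_image_of_injective _ hfinj, card_univ, Fintype.card_fin]
    rw [Finset.sum_congr rfl (fun D hD => fiber2_card hm hD), sum_const, smul_eq_mul]
  calc ((famSet n m).filter (fun D => D.card = i)).card *
        (i.factorial * (m.factorial ^ i * (n - i * m).factorial))
      = (((famSet n m).filter (fun D => D.card = i)).card * i.factorial) *
        (m.factorial ^ i * (n - i * m).factorial) := by ring
    _ = (ordFam n m i).card * (m.factorial ^ i * (n - i * m).factorial) := by rw [h3]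
    _ = n.factorial := by rw [← h2, h1]

end perm

lemma rb_group (n m : ℕ) (hm : 2 ≤ m) :
    restrictedBell n m = ∑ i ∈ Finset.range (n / m + 1),
      ((famSet n m).filter (fun D => D.card = i)).card * restrictedBell (n - i * m) (m - 1) := by
  classical
  rw [rb_eq_sum n m hm]
  rw [← Finset.sum_fiberwise_of_maps_to (g := fun D : Finset (Finset (Fin n)) => D.card)
    (t := Finset.range (n / m + 1))
    (fun D hD => by
      rw [Finset.mem_range]
      show D.card < n / m + 1
      have h1 : D.card * m ≤ n := by
        rw [← famSet_sup_card hD]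
        calc (D.sup id).card ≤ (univ : Finset (Fin n)).card := card_le_univ _
          _ = n := by rw [card_univ, Fintype.card_fin]
      have hm0 : 0 < m := by omega
      have h2 : D.card ≤ n / m := (Nat.le_div_iff_mul_le hm0).2 h1
      omega)
    (fun D => restrictedBell (n - D.card * m) (m - 1))]
  refine Finset.sum_congr rfl (fun i _ => ?_)
  calc ∑ D ∈ (famSet n m).filter (fun D => D.card = i),
        restrictedBell (n - D.card * m) (m - 1)
      = ∑ D ∈ (famSet n m).filter (fun D => D.card = i),
        restrictedBell (n - i * m) (m - 1) :=
        Finset.sum_congr rfl (fun D hD => by rw [(Finset.mem_filter.1 hD).2])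
    _ = ((famSet n m).filter (fun D => D.card = i)).card * restrictedBell (n - i * m) (m - 1) := by
        rw [Finset.sum_const, smul_eq_mul]

/-- `B_{n,≤m} = ∑_{i=0}^{⌊n/m⌋} n!/(i!·(m!)^i·(n-im)!) · B_{n-im,≤m-1}` for `m ≥ 2`. -/
theorem restrictedBell_reduction (n m : ℕ) (hm : 2 ≤ m) :
    (restrictedBell n m : ℚ) =
      ∑ i ∈ Finset.range (n / m + 1),
        (n.factorial : ℚ) / (i.factorial * (m.factorial) ^ i * (n - i * m).factorial) *
          restrictedBell (n - i * m) (m - 1) := by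
  classical
  rw [rb_group n m hm]
  push_cast
  refine Finset.sum_congr rfl (fun i hi => ?_)
  rw [Finset.mem_range] at hi
  have him : i * m ≤ n := by
    have h1 : i ≤ n / m := by omega
    calc i * m ≤ (n / m) * m := Nat.mul_le_mul_right m h1
      _ ≤ n := Nat.div_mul_le_self n m
  have key := fam_count (n := n) (m := m) (i := i) hm him
  have keyQ : ((((famSet n m).filter (fun D => D.card = i)).card : ℚ)) *
      ((i.factorial : ℚ) * ((m.factorial : ℚ) ^ i * ((n - i * m).factorial : ℚ))) =
      (n.factorial : ℚ) := by
    exact_mod_cast congrArg (Nat.cast : ℕ → ℚ) key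
  have hne : ((i.factorial : ℚ) * (m.factorial : ℚ) ^ i * ((n - i * m).factorial : ℚ)) ≠ 0 := by
    positivity
  have hc : ((((famSet n m).filter (fun D => D.card = i)).card : ℚ)) =
      (n.factorial : ℚ) / ((i.factorial : ℚ) * (m.factorial : ℚ) ^ i * ((n - i * m).factorial : ℚ)) := by
    rw [eq_div_iff hne]
    linear_combination keyQ
  rw [hc]
end

section
/- For every natural number n, the associated Bell numbers and the Bell numbers are related by B_{n,≥2} = ∑_{i=0}^{n} (-1)^i · C(n,i) · B_{n-i}. -/
open Finset


variable {α β : Type*} [DecidableEq α] [DecidableEq β]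

lemma map_sup_id (f : α ↪ β) (s : Finset (Finset α)) :
    (s.sup id).map f = s.sup (fun b => b.map f) := by
  induction s using Finset.induction with
  | empty => simp
  | insert _ _ _ ih => simp [Finset.sup_insert, Finset.map_union, ih]

/-- Transport a finpartition of a finset along an embedding. -/
def Finpartition.mapEmb (f : α ↪ β) {s : Finset α} (P : Finpartition s) :
    Finpartition (s.map f) where
  parts := P.parts.image (Finset.map f)
  supIndep := by
    rw [Finset.supIndep_iff_pairwiseDisjoint]
    rintro _ h1 _ h2 hne
    simp only [coe_image, Set.mem_image, mem_coe] at h1 h2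
    obtain ⟨b1, hb1, rfl⟩ := h1
    obtain ⟨b2, hb2, rfl⟩ := h2
    have hb : b1 ≠ b2 := fun h => hne (by rw [h])
    have := P.disjoint hb1 hb2 hb
    simp only [Function.onFun, id] at this ⊢
    rwa [Finset.disjoint_map]
  sup_parts := by
    rw [Finset.sup_image]
    have := map_sup_id f P.parts
    rw [P.sup_parts] at this
    rw [show (id ∘ Finset.map f : Finset α → Finset β) = fun b => b.map f from rfl, ← this]
  bot_notMem := by
    simp only [bot_eq_empty, mem_image]
    rintro ⟨b, hb, hbe⟩
    rw [Finset.map_eq_empty] at hbe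
    subst hbe; exact P.bot_notMem hb

lemma Finpartition.mapEmb_parts (f : α ↪ β) {s : Finset α} (P : Finpartition s) :
    (P.mapEmb f).parts = P.parts.image (Finset.map f) := rfl

lemma Finpartition.parts_injective {s : Finset α} :
    Function.Injective (Finpartition.parts : Finpartition s → Finset (Finset α)) := by
  intro P Q h
  ext b
  rw [h]

lemma mapEmb_bijective (f : α ↪ β) (s : Finset α) :
    Function.Bijective (Finpartition.mapEmb f (s := s)) := by
  constructor
  · intro P Q h
    apply Finpartition.parts_injective
    have h' : P.parts.image (Finset.map f) = Q.parts.image (Finset.map f) :=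
      congrArg Finpartition.parts h
    exact Finset.image_injective (Finset.map_injective f) h'
  · intro Q
    have hpre : ∀ b ∈ Q.parts, (b.preimage f f.injective.injOn).map f = b := by
      intro b hb
      have hsub : (b : Set β) ⊆ Set.range f := by
        refine Set.Subset.trans (Finset.coe_subset.mpr (Q.le hb)) ?_
        rw [Finset.coe_map]
        exact Set.image_subset_range _ _
      apply Finset.coe_injective
      rw [Finset.coe_map, Finset.coe_preimage]
      exact Set.image_preimage_eq_of_subset hsub
    refine ⟨⟨Q.parts.image (fun b => b.preimage f f.injective.injOn), ?_, ?_, ?_⟩, ?_⟩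
    · rw [Finset.supIndep_iff_pairwiseDisjoint]
      rintro _ h1 _ h2 hne
      simp only [coe_image, Set.mem_image, mem_coe] at h1 h2
      obtain ⟨b1, hb1, rfl⟩ := h1
      obtain ⟨b2, hb2, rfl⟩ := h2
      have hb : b1 ≠ b2 := fun h => hne (by rw [h])
      have hd := Q.disjoint hb1 hb2 hb
      simp only [Function.onFun, id] at hd ⊢
      rw [Finset.disjoint_left] at hd ⊢
      intro x hx1 hx2
      rw [Finset.mem_preimage] at hx1 hx2
      exact hd hx1 hx2
    · apply Finset.map_injective f
      rw [map_sup_id, Finset.sup_image]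
      simp only [Function.comp_def]
      rw [Finset.sup_congr rfl (fun b hb => hpre b hb)]
      have : Q.parts.sup (fun b => b) = s.map f := Q.sup_parts
      exact this
    · simp only [bot_eq_empty, mem_image]
      rintro ⟨b, hb, hbe⟩
      apply Q.bot_notMem
      have := hpre b hb
      rw [hbe] at this
      simp only [Finset.map_empty] at this
      rw [← this] at hb
      exact hb
    · apply Finpartition.parts_injective
      rw [Finpartition.mapEmb_parts]
      simp only [Finset.image_image]
      simp only [Function.comp_def]
      rw [Finset.image_congr (fun b hb => hpre b hb)]; exact Finset.image_id

lemma card_cond_mapEmb (f : α ↪ β) (s : Finset α) (p : ℕ → Prop) :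
    Nat.card {P : Finpartition (s.map f) // ∀ b ∈ P.parts, p b.card}
      = Nat.card {P : Finpartition s // ∀ b ∈ P.parts, p b.card} := by
  apply Nat.card_congr
  refine (Equiv.subtypeEquiv (Equiv.ofBijective _ (mapEmb_bijective f s)) ?_).symm
  intro P
  show (∀ b ∈ P.parts, p b.card) ↔ ∀ b ∈ (P.mapEmb f).parts, p b.card
  rw [Finpartition.mapEmb_parts]
  constructor
  · rintro h b hb
    rw [Finset.mem_image] at hb
    obtain ⟨a, ha, rfl⟩ := hb
    rw [Finset.card_map]
    exact h a ha
  · intro h b hb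
    have := h (b.map f) (Finset.mem_image_of_mem _ hb)
    rwa [Finset.card_map] at this

lemma card_mapEmb (f : α ↪ β) (s : Finset α) :
    Nat.card (Finpartition (s.map f)) = Nat.card (Finpartition s) :=
  Nat.card_congr (Equiv.ofBijective _ (mapEmb_bijective f s)).symm

lemma exists_map_univ {n : ℕ} (t : Finset (Fin n)) :
    ∃ f : Fin t.card ↪ Fin n, (Finset.univ : Finset (Fin t.card)).map f = t := by
  refine ⟨(t.orderEmbOfFin rfl).toEmbedding, ?_⟩
  apply Finset.coe_injective
  rw [Finset.coe_map, Finset.coe_univ, Set.image_univ]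
  exact t.range_orderEmbOfFin rfl

lemma card_cond_eq_associatedBell {n : ℕ} (t : Finset (Fin n)) :
    Nat.card {P : Finpartition t // ∀ b ∈ P.parts, 2 ≤ b.card} = associatedBell t.card 2 := by
  obtain ⟨f, hf⟩ := exists_map_univ t
  rw [associatedBell, ← card_cond_mapEmb f Finset.univ (fun c => 2 ≤ c), hf]

lemma card_eq_bell {n : ℕ} (t : Finset (Fin n)) :
    Nat.card (Finpartition t) = bell t.card := by
  obtain ⟨f, hf⟩ := exists_map_univ t
  rw [bell, ← card_mapEmb f Finset.univ, hf]


variable {n : ℕ}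

/-- The set of elements that form singleton blocks of `P`. -/
def sings (P : Finpartition (univ : Finset (Fin n))) : Finset (Fin n) :=
  univ.filter (fun x => {x} ∈ P.parts)

lemma mem_sings {P : Finpartition (univ : Finset (Fin n))} {x : Fin n} :
    x ∈ sings P ↔ {x} ∈ P.parts := by simp [sings]

variable {S : Finset (Fin n)}

lemma small_parts_eq (P : Finpartition (univ : Finset (Fin n))) (hP : sings P = S) :
    P.parts.filter (fun b => ¬ 2 ≤ b.card) = S.image (fun x => ({x} : Finset (Fin n))) := by
  ext b
  simp only [mem_filter, mem_image]
  constructor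
  · rintro ⟨hb, hcard⟩
    have hpos : 0 < b.card := Finset.card_pos.mpr (P.nonempty_of_mem_parts hb)
    have h1 : b.card = 1 := by omega
    obtain ⟨x, rfl⟩ := Finset.card_eq_one.mp h1
    exact ⟨x, by rw [← hP, mem_sings]; exact hb, rfl⟩
  · rintro ⟨x, hx, rfl⟩
    rw [← hP, mem_sings] at hx
    exact ⟨hx, by simp⟩

lemma sup_image_singleton (S : Finset (Fin n)) :
    (S.image (fun x => ({x} : Finset (Fin n)))).sup id = S := by
  rw [Finset.sup_image]
  exact Finset.sup_singleton_eq_self S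

/-- Restriction of a finpartition with singleton set `S` to the complement of `S`. -/
def fiberFwd (P : Finpartition (univ : Finset (Fin n))) (hP : sings P = S) :
    Finpartition (Sᶜ : Finset (Fin n)) where
  parts := P.parts.filter (fun b => 2 ≤ b.card)
  supIndep := P.supIndep.subset (filter_subset _ _)
  sup_parts := by
    have hsplit := Finset.filter_union_filter_not_eq (p := fun b => 2 ≤ b.card) P.parts
    have hsup : P.parts.sup id = univ := P.sup_parts
    rw [← hsplit, Finset.sup_union, small_parts_eq P hP, sup_image_singleton] at hsup
    apply le_antisymm
    · apply Finset.sup_le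
      intro b hb
      rw [mem_filter] at hb
      rw [le_compl_iff_disjoint_right]
      rw [Finset.disjoint_right]
      intro x hxS hxb
      rw [← hP, mem_sings] at hxS
      have hne : b ≠ {x} := by
        intro h
        rw [h] at hb
        simp at hb
      have hd := P.disjoint hb.1 hxS hne
      rw [Function.onFun, id, id, Finset.disjoint_right] at hd
      exact hd (Finset.mem_singleton_self x) hxb
    · intro x hx
      have hxu : x ∈ ((P.parts.filter fun b => 2 ≤ b.card).sup id) ∪ S := by
        rw [show ((P.parts.filter fun b => 2 ≤ b.card).sup id) ∪ S = univ from hsup]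
        exact mem_univ x
      rw [Finset.mem_union] at hxu
      rcases hxu with h | h
      · exact h
      · exact absurd h (Finset.mem_compl.mp hx)
  bot_notMem := by
    rw [Finset.mem_filter]
    rintro ⟨h, -⟩
    exact P.bot_notMem h

/-- Extension of a finpartition of `Sᶜ` by the singletons of `S`. -/
def fiberBwd (Q : Finpartition (Sᶜ : Finset (Fin n))) :
    Finpartition (univ : Finset (Fin n)) where
  parts := Q.parts ∪ S.image (fun x => {x})
  supIndep := by
    rw [Finset.supIndep_iff_pairwiseDisjoint]
    rintro b hb c hc hne
    simp only [coe_union, Set.mem_union, mem_coe, coe_image, Set.mem_image] at hb hc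
    have hsub : ∀ d ∈ Q.parts, (d : Finset (Fin n)) ⊆ Sᶜ := fun d hd => Q.le hd
    simp only [Function.onFun, id]
    rcases hb with hb | ⟨x, hx, rfl⟩ <;> rcases hc with hc | ⟨y, hy, rfl⟩
    · exact Q.disjoint hb hc hne
    · rw [Finset.disjoint_singleton_right]
      intro hyb
      exact (Finset.mem_compl.mp (hsub b hb hyb)) hy
    · rw [Finset.disjoint_singleton_left]
      intro hxc
      exact (Finset.mem_compl.mp (hsub c hc hxc)) hx
    · rw [Finset.disjoint_singleton_right, Finset.mem_singleton]
      intro h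
      exact hne (by rw [h])
  sup_parts := by
    rw [Finset.sup_union, Q.sup_parts, sup_image_singleton]
    ext x
    simp only [Finset.sup_eq_union, Finset.mem_union, Finset.mem_compl, mem_univ, iff_true]
    tauto
  bot_notMem := by
    rw [Finset.mem_union]
    rintro (h | h)
    · exact Q.bot_notMem h
    · rw [Finset.mem_image] at h
      obtain ⟨x, -, hx⟩ := h
      rw [Finset.bot_eq_empty] at hx
      exact Finset.singleton_ne_empty x hx

lemma sings_fiberBwd {Q : Finpartition (Sᶜ : Finset (Fin n))}
    (hQ : ∀ b ∈ Q.parts, 2 ≤ b.card) : sings (fiberBwd Q) = S := by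
  ext x
  rw [mem_sings]
  show {x} ∈ Q.parts ∪ S.image (fun x => {x}) ↔ x ∈ S
  rw [Finset.mem_union, Finset.mem_image]
  constructor
  · rintro (h | ⟨y, hy, hxy⟩)
    · have := hQ _ h
      simp at this
    · rwa [← Finset.singleton_injective hxy]
  · intro h
    exact Or.inr ⟨x, h, rfl⟩

lemma Finpartition.parts_injective' {s : Finset (Fin n)} :
    Function.Injective (Finpartition.parts : Finpartition s → Finset (Finset (Fin n))) := by
  intro P Q h
  ext b
  rw [h]

/-- The fiber of `sings` over `S` is equivalent to partitions of `Sᶜ` with blocks of size `≥ 2`. -/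
def fiberEquiv (S : Finset (Fin n)) :
    {P : Finpartition (univ : Finset (Fin n)) // sings P = S} ≃
      {Q : Finpartition (Sᶜ : Finset (Fin n)) // ∀ b ∈ Q.parts, 2 ≤ b.card} where
  toFun := fun P => ⟨fiberFwd P.1 P.2, fun b hb => (Finset.mem_filter.mp hb).2⟩
  invFun := fun Q => ⟨fiberBwd Q.1, sings_fiberBwd Q.2⟩
  left_inv := by
    rintro ⟨P, hP⟩
    apply Subtype.ext
    apply Finpartition.parts_injective'
    show (P.parts.filter (fun b => 2 ≤ b.card)) ∪ S.image (fun x => {x}) = P.parts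
    rw [← small_parts_eq P hP]
    exact Finset.filter_union_filter_not_eq (p := fun b : Finset (Fin n) => 2 ≤ b.card) _
  right_inv := by
    rintro ⟨Q, hQ⟩
    apply Subtype.ext
    apply Finpartition.parts_injective'
    show (Q.parts ∪ S.image (fun x => {x})).filter (fun b => 2 ≤ b.card) = Q.parts
    rw [Finset.filter_union]
    rw [Finset.filter_true_of_mem hQ]
    have : (S.image (fun x => ({x} : Finset (Fin n)))).filter (fun b => 2 ≤ b.card) = ∅ := by
      rw [Finset.filter_eq_empty_iff]
      rintro b hb
      rw [Finset.mem_image] at hb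
      obtain ⟨x, -, rfl⟩ := hb
      simp
    rw [this, Finset.union_empty]


lemma sum_triangle {M : Type*} [AddCommMonoid M] (n : ℕ) (F : ℕ → ℕ → M) :
    ∑ i ∈ range (n + 1), ∑ j ∈ range (n + 1 - i), F i j
      = ∑ k ∈ range (n + 1), ∑ i ∈ range (k + 1), F i (k - i) := by
  rw [Finset.sum_sigma', Finset.sum_sigma']
  apply Finset.sum_nbij' (i := fun p => ⟨p.1 + p.2, p.1⟩) (j := fun p => ⟨p.2, p.1 - p.2⟩)
  · rintro ⟨a, b⟩ h
    simp only [mem_sigma, mem_range] at h ⊢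
    omega
  · rintro ⟨a, b⟩ h
    simp only [mem_sigma, mem_range] at h ⊢
    omega
  · rintro ⟨a, b⟩ h
    simp only [mem_sigma, mem_range] at h
    have hb : a + b - a = b := by omega
    simp [hb]
  · rintro ⟨a, b⟩ h
    simp only [mem_sigma, mem_range] at h
    have ha : b + (a - b) = a := by omega
    simp [ha]
  · rintro ⟨a, b⟩ h
    simp only [mem_sigma, mem_range] at h
    have hb : a + b - a = b := by omega
    simp [hb]

lemma binomial_inversion (a B : ℕ → ℤ)
    (H : ∀ m, B m = ∑ i ∈ range (m + 1), (m.choose i : ℤ) * a (m - i)) (n : ℕ) :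
    a n = ∑ i ∈ range (n + 1), (-1 : ℤ) ^ i * (n.choose i : ℤ) * B (n - i) := by
  have key : ∑ i ∈ range (n + 1), (-1 : ℤ) ^ i * (n.choose i : ℤ) * B (n - i)
      = ∑ i ∈ range (n + 1), ∑ j ∈ range (n + 1 - i),
          (-1 : ℤ) ^ i * (n.choose i : ℤ) * (((n - i).choose j : ℤ) * a (n - i - j)) := by
    apply Finset.sum_congr rfl
    intro i hi
    rw [mem_range] at hi
    rw [H (n - i), Finset.mul_sum]
    have : n - i + 1 = n + 1 - i := by omega
    rw [this]
  rw [key, sum_triangle n (fun i j => (-1 : ℤ) ^ i * (n.choose i : ℤ) *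
      (((n - i).choose j : ℤ) * a (n - i - j)))]
  have inner : ∀ k ∈ range (n + 1),
      (∑ i ∈ range (k + 1), (-1 : ℤ) ^ i * (n.choose i : ℤ) *
        (((n - i).choose (k - i) : ℤ) * a (n - i - (k - i))))
      = (n.choose k : ℤ) * a (n - k) * ∑ i ∈ range (k + 1), (-1 : ℤ) ^ i * (k.choose i : ℤ) := by
    intro k hk
    rw [mem_range] at hk
    rw [Finset.mul_sum]
    apply Finset.sum_congr rfl
    intro i hi
    rw [mem_range] at hi
    have h1 : n - i - (k - i) = n - k := by omega
    have h2 : (n.choose k) * (k.choose i) = (n.choose i) * ((n - i).choose (k - i)) :=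
      Nat.choose_mul (by omega)
    rw [h1]
    have : ((n.choose k : ℤ)) * (k.choose i : ℤ) = (n.choose i : ℤ) * ((n - i).choose (k - i) : ℤ) := by
      exact_mod_cast congrArg Nat.cast h2
    linear_combination (-(-1 : ℤ) ^ i * a (n - k)) * this
  rw [Finset.sum_congr rfl inner]
  rw [Finset.sum_eq_single 0]
  · simp
  · intro k hk hk0
    rw [Int.alternating_sum_range_choose_of_ne hk0, mul_zero]
  · intro h
    simp at h

lemma bell_eq_sum (n : ℕ) :
    bell n = ∑ i ∈ Finset.range (n + 1), n.choose i * associatedBell (n - i) 2 := by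
  classical
  have step1 : bell n = ∑ S ∈ (univ : Finset (Finset (Fin n))), associatedBell (n - S.card) 2 := by
    rw [bell, Nat.card_eq_fintype_card, ← Finset.card_univ,
      Finset.card_eq_sum_card_fiberwise (f := sings)
        (t := (univ : Finset (Finset (Fin n)))) (fun x _ => mem_univ _)]
    apply Finset.sum_congr rfl
    intro S _
    rw [← Fintype.card_subtype, ← Nat.card_eq_fintype_card, Nat.card_congr (fiberEquiv S),
      card_cond_eq_associatedBell Sᶜ, Finset.card_compl]
    congr 2
    simp
  rw [step1, ← Finset.powerset_univ, Finset.sum_powerset, Finset.card_univ, Fintype.card_fin]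
  apply Finset.sum_congr rfl
  intro j hj
  have hc : ∀ t ∈ Finset.powersetCard j (univ : Finset (Fin n)),
      associatedBell (n - t.card) 2 = associatedBell (n - j) 2 := by
    intro t ht
    rw [(Finset.mem_powersetCard.mp ht).2]
  rw [Finset.sum_congr rfl hc, Finset.sum_const, Finset.card_powersetCard, Finset.card_univ,
    Fintype.card_fin, smul_eq_mul]

/-- `B_{n,≥2} = ∑_{i=0}^{n} (-1)^i · C(n,i) · B_{n-i}`. -/
theorem associatedBell_two_eq_alternating_sum (n : ℕ) :
    (associatedBell n 2 : ℤ) =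
      ∑ i ∈ Finset.range (n + 1), (-1 : ℤ) ^ i * (n.choose i) * bell (n - i) := by
  have H : ∀ m, ((bell m : ℤ)) =
      ∑ i ∈ Finset.range (m + 1), (m.choose i : ℤ) * ((associatedBell (m - i) 2 : ℕ) : ℤ) := by
    intro m
    exact_mod_cast congrArg (Nat.cast : ℕ → ℤ) (bell_eq_sum m)
  exact binomial_inversion (fun k => ((associatedBell k 2 : ℕ) : ℤ))
    (fun k => ((bell k : ℕ) : ℤ)) H n
end
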